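/- arXiv:1610.10078 — 9 statements merged into one kernel-verified Lean document; each statement's English description precedes it below -/
import Mathlib

section
/- Let r > 0, let S : [0,∞) → (0,1] be a measurable survival function with ∫_0^∞ e^{−rt} S(t) dt < ∞, and let u : (0,∞) → ℝ be a concave utility function. Set c₀ = (∫_0^∞ e^{−rt} S(t) dt)^{−1}. Then for every measurable payout function c : [0,∞) → (0,∞) satisfying the budget constraint ∫_0^∞ e^{−rt} S(t) c(t) dt = 1 and for which t ↦ e^{−rt} S(t) u(c(t)) is integrable, one has ∫_0^∞ e^{−rt} S(t) u(c(t)) dt ≤ ∫_0^∞ e^{−rt} S(t) u(c₀) dt. In other words, the constant payout c(t) ≡ c₀ maximizes discounted lifetime utility among all actuarially fair annuity payout functions. -/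
open MeasureTheory Real

/-- Supporting line for a concave function on `Ioi 0`. -/
lemma concave_supporting_line {u : ℝ → ℝ} (hu : ConcaveOn ℝ (Set.Ioi 0) u)
    {c₀ : ℝ} (hc₀ : 0 < c₀) :
    ∃ m : ℝ, ∀ x ∈ Set.Ioi (0 : ℝ), u x ≤ u c₀ + m * (x - c₀) := by
  have hanti := hu.slope_anti (Set.mem_Ioi.mpr hc₀)
  have hmemhalf : c₀ / 2 ∈ Set.Ioi (0:ℝ) \ {c₀} := by
    constructor
    · exact Set.mem_Ioi.mpr (by linarith)
    · simp only [Set.mem_singleton_iff]; intro h; linarith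
  have hmem : ∀ y, c₀ < y → y ∈ Set.Ioi (0:ℝ) \ {c₀} := by
    intro y hy
    exact ⟨Set.mem_Ioi.mpr (lt_trans hc₀ hy), by simp; intro h; linarith⟩
  set A : Set ℝ := slope u c₀ '' Set.Ioi c₀ with hA
  have hne : A.Nonempty := ⟨_, ⟨c₀ + 1, by simp, rfl⟩⟩
  have hbdd : BddAbove A := by
    refine ⟨slope u c₀ (c₀ / 2), ?_⟩
    rintro _ ⟨y, hy, rfl⟩
    exact hanti hmemhalf (hmem y hy) (by linarith [Set.mem_Ioi.mp hy])
  refine ⟨sSup A, fun x hx => ?_⟩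
  have hx0 := Set.mem_Ioi.mp hx
  rcases lt_trichotomy x c₀ with h | h | h
  · -- x < c₀ : slope u c₀ x ≥ sSup A
    have hge : sSup A ≤ slope u c₀ x := by
      apply csSup_le hne
      rintro _ ⟨y, hy, rfl⟩
      exact hanti ⟨hx, by simp; intro hh; linarith⟩ (hmem y hy)
        (by linarith [Set.mem_Ioi.mp hy])
    rw [slope_def_field] at hge
    have hd : x - c₀ < 0 := by linarith
    rw [le_div_iff_of_neg hd] at hge
    linarith
  · subst h; simp
  · -- c₀ < x : slope u c₀ x ≤ sSup A
    have hle : slope u c₀ x ≤ sSup A := le_csSup hbdd ⟨x, Set.mem_Ioi.mpr h, rfl⟩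
    rw [slope_def_field] at hle
    have hd : (0:ℝ) < x - c₀ := by linarith
    rw [div_le_iff₀ hd] at hle
    linarith

/-- Among all actuarially fair annuity payout functions, the constant
payout `c₀ = (∫_0^∞ e^{-rt} S t dt)⁻¹` maximizes discounted lifetime utility, for any
concave utility `u`. -/
theorem annuity_constant_payout_optimal
    (r : ℝ) (hr : 0 < r)
    (S : ℝ → ℝ) (hSmeas : Measurable S)
    (hS : ∀ t, 0 ≤ t → S t ∈ Set.Ioc (0 : ℝ) 1)
    (hSint : IntegrableOn (fun t => Real.exp (-r * t) * S t) (Set.Ioi 0))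
    (u : ℝ → ℝ) (hu : ConcaveOn ℝ (Set.Ioi 0) u)
    (c₀ : ℝ) (hc₀ : c₀ = (∫ t in Set.Ioi (0 : ℝ), Real.exp (-r * t) * S t)⁻¹)
    (c : ℝ → ℝ) (hcmeas : Measurable c) (hcpos : ∀ t, 0 ≤ t → 0 < c t)
    (hbudget : ∫ t in Set.Ioi (0 : ℝ), Real.exp (-r * t) * S t * c t = 1)
    (hint : IntegrableOn (fun t => Real.exp (-r * t) * S t * u (c t)) (Set.Ioi 0)) :
    ∫ t in Set.Ioi (0 : ℝ), Real.exp (-r * t) * S t * u (c t) ≤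
      ∫ t in Set.Ioi (0 : ℝ), Real.exp (-r * t) * S t * u c₀ := by
  set w : ℝ → ℝ := fun t => Real.exp (-r * t) * S t with hw
  have hwpos : ∀ t ∈ Set.Ioi (0:ℝ), 0 < w t := fun t ht =>
    mul_pos (Real.exp_pos _) ((hS t (le_of_lt (Set.mem_Ioi.mp ht))).1)
  set I : ℝ := ∫ t in Set.Ioi (0 : ℝ), w t with hI
  have hIpos : 0 < I := by
    have hnn : 0 ≤ᶠ[ae (volume.restrict (Set.Ioi (0:ℝ)))] w := by
      filter_upwards [ae_restrict_mem measurableSet_Ioi] with t ht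
      exact le_of_lt (hwpos t ht)
    rw [hI, setIntegral_pos_iff_support_of_nonneg_ae hnn hSint]
    have hsub : Set.Ioi (0:ℝ) ⊆ Function.support w ∩ Set.Ioi 0 := fun t ht =>
      ⟨ne_of_gt (hwpos t ht), ht⟩
    calc (0:ENNReal) < volume (Set.Ioi (0:ℝ)) := by simp
      _ ≤ volume (Function.support w ∩ Set.Ioi 0) := measure_mono hsub
  show ∫ t in Set.Ioi (0:ℝ), w t * u (c t) ≤ ∫ t in Set.Ioi (0:ℝ), w t * u c₀
  have hbudget : ∫ t in Set.Ioi (0:ℝ), w t * c t = 1 := hbudget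
  have hint : IntegrableOn (fun t => w t * u (c t)) (Set.Ioi 0) := hint
  have hc₀pos : 0 < c₀ := by rw [hc₀]; exact inv_pos.mpr hIpos
  have hc₀I : c₀ * I = 1 := by rw [hc₀]; field_simp
  obtain ⟨m, hm⟩ := concave_supporting_line hu hc₀pos
  -- integrability of w * c
  have hwc_int : IntegrableOn (fun t => w t * c t) (Set.Ioi 0) := by
    by_contra h
    rw [integral_undef h] at hbudget
    exact one_ne_zero hbudget.symm
  -- RHS auxiliary integrand
  have hrhs_int : IntegrableOn (fun t => w t * (u c₀ + m * (c t - c₀))) (Set.Ioi 0) := by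
    have : (fun t => w t * (u c₀ + m * (c t - c₀)))
        = fun t => (u c₀ - m * c₀) * w t + m * (w t * c t) := by
      funext t; ring
    rw [this]
    exact (hSint.const_mul _).add (hwc_int.const_mul m)
  have hmono : ∫ t in Set.Ioi (0:ℝ), w t * u (c t) ≤
      ∫ t in Set.Ioi (0:ℝ), w t * (u c₀ + m * (c t - c₀)) := by
    apply setIntegral_mono_on hint hrhs_int measurableSet_Ioi
    intro t ht
    have := hm (c t) (Set.mem_Ioi.mpr (hcpos t (le_of_lt (Set.mem_Ioi.mp ht))))
    exact mul_le_mul_of_nonneg_left this (le_of_lt (hwpos t ht))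
  have heq : ∫ t in Set.Ioi (0:ℝ), w t * (u c₀ + m * (c t - c₀))
      = u c₀ * I := by
    have hsplit : (fun t => w t * (u c₀ + m * (c t - c₀)))
        = fun t => (u c₀ - m * c₀) * w t + m * (w t * c t) := by
      funext t; ring
    rw [hsplit, integral_add ((hSint.const_mul _)) (hwc_int.const_mul m),
      integral_const_mul, integral_const_mul]
    have : ∫ t in Set.Ioi (0:ℝ), w t * c t = 1 := hbudget
    rw [this, ← hI]
    linear_combination (-m) * hc₀I
  have hfinal : ∫ t in Set.Ioi (0:ℝ), w t * u c₀ = u c₀ * I := by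
    rw [hI, mul_comm, ← integral_mul_const]
  calc ∫ t in Set.Ioi (0:ℝ), w t * u (c t)
      ≤ ∫ t in Set.Ioi (0:ℝ), w t * (u c₀ + m * (c t - c₀)) := hmono
    _ = u c₀ * I := heq
    _ = ∫ t in Set.Ioi (0:ℝ), w t * u c₀ := hfinal.symm
end

section
/- Fix an integer n ≥ 2, γ > 0 with γ ≠ 1, a rate r > 0, and a survival function t ↦ ₜp_x : [0,∞) → (0,1] which is continuous, strictly decreasing, with ₀p_x = 1 and ₜp_x → 0 as t → ∞. Define the payout D(t) = β_{n,γ}(ₜp_x)^{1/γ} / ∫_0^∞ e^{−rs} β_{n,γ}(ₛp_x)^{1/γ} ds. Then D satisfies the tontine budget constraint ∫_0^∞ e^{−rt} D(t) dt = 1, and for every measurable d : [0,∞) → (0,∞) satisfying ∫_0^∞ e^{−rt} d(t) dt = 1 and for which the integrand below is integrable, one has ∫_0^∞ e^{−rt} β_{n,γ}(ₜp_x) · d(t)^{1−γ}/(1−γ) dt ≤ ∫_0^∞ e^{−rt} β_{n,γ}(ₜp_x) · D(t)^{1−γ}/(1−γ) dt. That is, D is the optimal tontine payout function for CRRA utility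 with risk aversion γ. -/
/-!
The felicity `u(x) = x ^ (1 - γ) / (1 - γ)` is concave, so pointwise
`e^{-rt} β u(d) ≤ e^{-rt} β u(D) + e^{-rt} β D^{-γ} (d - D)`.
For `D = β^{1/γ} / I` the marginal utility `β D^{-γ} = I^γ` does not depend on `t`, so after
integration the correction term is `I^γ (∫ e^{-rt} d - ∫ e^{-rt} D) = 0` by the budget constraint.
-/

open MeasureTheory Real Finset

/-- `theta n γ p = E[(n/N(p))^{1-γ}]` where `N(p)-1 ~ Bin(n-1,p)`. -/
noncomputable def theta (n : ℕ) (γ p : ℝ) : ℝ :=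
  ∑ k ∈ Finset.range n,
    ((n - 1).choose k : ℝ) * p ^ k * (1 - p) ^ (n - 1 - k) *
      ((n : ℝ) / ((k : ℝ) + 1)) ^ (1 - γ)

/-- `beta n γ p = p * theta n γ p`. -/
noncomputable def beta (n : ℕ) (γ p : ℝ) : ℝ := p * theta n γ p

/-- Optimal tontine payout function. -/
noncomputable def Dopt (n : ℕ) (γ r : ℝ) (p : ℝ → ℝ) (t : ℝ) : ℝ :=
  beta n γ (p t) ^ (1 / γ) /
    ∫ s in Set.Ioi (0 : ℝ), Real.exp (-r * s) * beta n γ (p s) ^ (1 / γ)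

/-- Cumulative discounted payout of the optimal tontine. -/
noncomputable def Delta (n : ℕ) (γ r : ℝ) (p : ℝ → ℝ) (t : ℝ) : ℝ :=
  ∫ s in (0 : ℝ)..t, Real.exp (-r * s) * Dopt n γ r p s

lemma theta_pos {n : ℕ} (hn : 1 ≤ n) (γ : ℝ) {q : ℝ} (hq : q ∈ Set.Ioc (0 : ℝ) 1) :
    0 < theta n γ q := by
  obtain ⟨hq0, hq1⟩ := hq
  refine Finset.sum_pos' (fun k _ => by have := sub_nonneg.2 hq1; positivity)
    ⟨n - 1, Finset.mem_range.2 (by omega), ?_⟩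
  rw [Nat.choose_self, Nat.sub_self, pow_zero, Nat.cast_one, one_mul, mul_one]
  have : (0 : ℝ) < n := by exact_mod_cast hn
  positivity

lemma beta_pos {n : ℕ} (hn : 1 ≤ n) (γ : ℝ) {q : ℝ} (hq : q ∈ Set.Ioc (0 : ℝ) 1) :
    0 < beta n γ q :=
  mul_pos hq.1 (theta_pos hn γ hq)

lemma continuous_beta (n : ℕ) (γ : ℝ) : Continuous (beta n γ) := by
  unfold beta theta
  fun_prop

lemma rpow_div_le_inv_add_sub_one {q z : ℝ} (hq0 : q ≠ 0) (hq1 : q < 1) (hz : 0 < z) :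
    z ^ q / q ≤ 1 / q + (z - 1) := by
  rcases hq0.lt_or_gt with hq | hq
  · have hexp : 1 + q * Real.log z ≤ z ^ q := by
      rw [Real.rpow_def_of_pos hz, mul_comm (Real.log z)]
      linarith [Real.add_one_le_exp (q * Real.log z)]
    have hlog : q * (z - 1) ≤ q * Real.log z :=
      mul_le_mul_of_nonpos_left (Real.log_le_sub_one_of_pos hz) hq.le
    rw [div_le_iff_of_neg hq, add_mul, one_div_mul_cancel hq.ne]
    linarith
  · have h := rpow_one_add_le_one_add_mul_self (s := z - 1) (by linarith) hq.le hq1.le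
    rw [add_sub_cancel] at h
    rw [div_le_iff₀ hq, add_mul, one_div_mul_cancel hq.ne']
    linarith

lemma crra_le_tangent {γ x y : ℝ} (hγ : 0 < γ) (hγ1 : γ ≠ 1) (hx : 0 < x) (hy : 0 < y) :
    x ^ (1 - γ) / (1 - γ) ≤ y ^ (1 - γ) / (1 - γ) + y ^ (-γ) * (x - y) := by
  have hq0 : 1 - γ ≠ 0 := sub_ne_zero.2 hγ1.symm
  have key := rpow_div_le_inv_add_sub_one hq0 (by linarith) (div_pos hx hy)
  have hyq : 0 < y ^ (1 - γ) := Real.rpow_pos_of_pos hy _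
  have hy_neg : y ^ (-γ) = y ^ (1 - γ) / y := by
    rw [← Real.rpow_sub_one hy.ne']; ring_nf
  calc x ^ (1 - γ) / (1 - γ) = y ^ (1 - γ) * ((x / y) ^ (1 - γ) / (1 - γ)) := by
        rw [Real.div_rpow hx.le hy.le]; field_simp
    _ ≤ y ^ (1 - γ) * (1 / (1 - γ) + (x / y - 1)) := mul_le_mul_of_nonneg_left key hyq.le
    _ = y ^ (1 - γ) / (1 - γ) + y ^ (-γ) * (x - y) := by rw [hy_neg]; field_simp

/-- `c` is the Lagrange multiplier of the budget constraint `∫ a * d = const`; by concavity of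
the felicity, the first-order condition `b * D ^ (-γ) = c * a` is sufficient for optimality. -/
theorem integral_mul_crra_le_of_mul_rpow_neg_eq {α : Type*} [MeasurableSpace α] {μ : Measure α}
    {γ c : ℝ} (hγ : 0 < γ) (hγ1 : γ ≠ 1) {a b d D : α → ℝ}
    (hb : ∀ᵐ x ∂μ, 0 ≤ b x) (hd : ∀ᵐ x ∂μ, 0 < d x) (hD : ∀ᵐ x ∂μ, 0 < D x)
    (hfoc : ∀ᵐ x ∂μ, b x * D x ^ (-γ) = c * a x)
    (had : Integrable (fun x => a x * d x) μ) (haD : Integrable (fun x => a x * D x) μ)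
    (hbd : Integrable (fun x => b x * (d x ^ (1 - γ) / (1 - γ))) μ)
    (hcost : ∫ x, a x * d x ∂μ = ∫ x, a x * D x ∂μ) :
    ∫ x, b x * (d x ^ (1 - γ) / (1 - γ)) ∂μ ≤ ∫ x, b x * (D x ^ (1 - γ) / (1 - γ)) ∂μ := by
  have hbD_eq : (fun x => c / (1 - γ) * (a x * D x)) =ᵐ[μ]
      fun x => b x * (D x ^ (1 - γ) / (1 - γ)) := by
    filter_upwards [hD, hfoc] with x hDx hfocx
    rw [sub_eq_add_neg, Real.rpow_add hDx, Real.rpow_one, ← sub_eq_add_neg]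
    linear_combination (D x / (1 - γ)) * hfocx.symm
  have hbD : Integrable (fun x => b x * (D x ^ (1 - γ) / (1 - γ))) μ :=
    (haD.const_mul _).congr hbD_eq
  have htangent : ∀ᵐ x ∂μ, b x * (d x ^ (1 - γ) / (1 - γ)) ≤
      b x * (D x ^ (1 - γ) / (1 - γ)) + c * (a x * d x - a x * D x) := by
    filter_upwards [hb, hd, hD, hfoc] with x hbx hdx hDx hfocx
    calc b x * (d x ^ (1 - γ) / (1 - γ))
        ≤ b x * (D x ^ (1 - γ) / (1 - γ) + D x ^ (-γ) * (d x - D x)) :=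
          mul_le_mul_of_nonneg_left (crra_le_tangent hγ hγ1 hdx hDx) hbx
      _ = _ := by linear_combination (d x - D x) * hfocx
  have hcost_int : Integrable (fun x => c * (a x * d x - a x * D x)) μ :=
    (had.sub haD).const_mul c
  calc ∫ x, b x * (d x ^ (1 - γ) / (1 - γ)) ∂μ
      ≤ ∫ x, b x * (D x ^ (1 - γ) / (1 - γ)) + c * (a x * d x - a x * D x) ∂μ :=
        integral_mono_ae hbd (hbD.add hcost_int) htangent
    _ = ∫ x, b x * (D x ^ (1 - γ) / (1 - γ)) ∂μ := by
        rw [integral_add hbD hcost_int, integral_const_mul,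
          integral_sub had haD, hcost, sub_self, mul_zero, add_zero]

section Tontine

variable {n : ℕ} {γ r : ℝ} {p : ℝ → ℝ}

lemma integrableOn_exp_mul_beta_rpow (hγ : 0 < γ) (hr : 0 < r) (hp : Continuous p)
    (hmem : ∀ t, 0 ≤ t → p t ∈ Set.Ioc (0 : ℝ) 1) :
    IntegrableOn (fun s => Real.exp (-r * s) * beta n γ (p s) ^ (1 / γ)) (Set.Ioi 0) := by
  have hg : Continuous fun q => beta n γ q ^ (1 / γ) :=
    (continuous_beta n γ).rpow_const fun _ => Or.inr (by positivity)
  obtain ⟨C, hC⟩ := isCompact_Icc.exists_bound_of_continuousOn (hg.continuousOn (s := Set.Icc 0 1))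
  refine (exp_neg_integrableOn_Ioi 0 hr).mul_bdd (c := C) (hg.comp hp).aestronglyMeasurable ?_
  filter_upwards [ae_restrict_mem measurableSet_Ioi] with t ht
  exact hC _ (Set.Ioc_subset_Icc_self (hmem t (le_of_lt ht)))

noncomputable def tontineNormalizer (n : ℕ) (γ r : ℝ) (p : ℝ → ℝ) : ℝ :=
  ∫ s in Set.Ioi (0 : ℝ), Real.exp (-r * s) * beta n γ (p s) ^ (1 / γ)

lemma Dopt_eq_div_tontineNormalizer (t : ℝ) :
    Dopt n γ r p t = beta n γ (p t) ^ (1 / γ) / tontineNormalizer n γ r p :=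
  rfl

lemma tontineNormalizer_pos (hn : 1 ≤ n) (hγ : 0 < γ) (hr : 0 < r) (hp : Continuous p)
    (hmem : ∀ t, 0 ≤ t → p t ∈ Set.Ioc (0 : ℝ) 1) :
    0 < tontineNormalizer n γ r p := by
  have hpos : ∀ t ∈ Set.Ioi (0 : ℝ), 0 < Real.exp (-r * t) * beta n γ (p t) ^ (1 / γ) :=
    fun t ht => by have := beta_pos hn γ (hmem t (le_of_lt ht)); positivity
  rw [tontineNormalizer,
    setIntegral_pos_iff_support_of_nonneg_ae ?_ (integrableOn_exp_mul_beta_rpow hγ hr hp hmem),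
    Set.inter_eq_right.2 fun t ht => Function.mem_support.2 (hpos t ht).ne', Real.volume_Ioi]
  · exact ENNReal.zero_lt_top
  · filter_upwards [ae_restrict_mem measurableSet_Ioi] with t ht using (hpos t ht).le

lemma integrableOn_exp_mul_Dopt (hγ : 0 < γ) (hr : 0 < r) (hp : Continuous p)
    (hmem : ∀ t, 0 ≤ t → p t ∈ Set.Ioc (0 : ℝ) 1) :
    IntegrableOn (fun t => Real.exp (-r * t) * Dopt n γ r p t) (Set.Ioi 0) := by
  simp_rw [Dopt_eq_div_tontineNormalizer, ← mul_div_assoc]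
  exact (integrableOn_exp_mul_beta_rpow hγ hr hp hmem).div_const _

lemma integral_exp_mul_Dopt (hn : 1 ≤ n) (hγ : 0 < γ) (hr : 0 < r) (hp : Continuous p)
    (hmem : ∀ t, 0 ≤ t → p t ∈ Set.Ioc (0 : ℝ) 1) :
    ∫ t in Set.Ioi (0 : ℝ), Real.exp (-r * t) * Dopt n γ r p t = 1 := by
  simp_rw [Dopt_eq_div_tontineNormalizer, ← mul_div_assoc, integral_div]
  exact div_self (tontineNormalizer_pos hn hγ hr hp hmem).ne'

lemma Dopt_pos (hn : 1 ≤ n) (hγ : 0 < γ) (hr : 0 < r) (hp : Continuous p)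
    (hmem : ∀ t, 0 ≤ t → p t ∈ Set.Ioc (0 : ℝ) 1) {t : ℝ} (ht : 0 ≤ t) :
    0 < Dopt n γ r p t :=
  div_pos (Real.rpow_pos_of_pos (beta_pos hn γ (hmem t ht)) _)
    (tontineNormalizer_pos hn hγ hr hp hmem)

lemma beta_mul_Dopt_rpow_neg (hn : 1 ≤ n) (hγ : 0 < γ) (hr : 0 < r) (hp : Continuous p)
    (hmem : ∀ t, 0 ≤ t → p t ∈ Set.Ioc (0 : ℝ) 1) {t : ℝ} (ht : 0 ≤ t) :
    beta n γ (p t) * Dopt n γ r p t ^ (-γ) = tontineNormalizer n γ r p ^ γ := by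
  have hB := beta_pos hn γ (hmem t ht)
  have hI := tontineNormalizer_pos hn hγ hr hp hmem
  rw [Dopt_eq_div_tontineNormalizer, Real.div_rpow (by positivity) hI.le, ← Real.rpow_mul hB.le,
    one_div_mul_eq_div, neg_div, div_self hγ.ne', Real.rpow_neg hI.le, Real.rpow_neg_one]
  field_simp

end Tontine

theorem optimal_tontine_CRRA_general
    (n : ℕ) (hn : 2 ≤ n) (γ : ℝ) (hγ : 0 < γ) (hγ1 : γ ≠ 1)
    (r : ℝ) (hr : 0 < r)
    (p : ℝ → ℝ) (hcont : Continuous p)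
    (hmem : ∀ t, 0 ≤ t → p t ∈ Set.Ioc (0 : ℝ) 1)
    (D : ℝ → ℝ)
    (hD : D = fun t => beta n γ (p t) ^ (1 / γ) /
        ∫ s in Set.Ioi (0 : ℝ), Real.exp (-r * s) * beta n γ (p s) ^ (1 / γ)) :
    (∫ t in Set.Ioi (0 : ℝ), Real.exp (-r * t) * D t = 1) ∧
    (∀ d : ℝ → ℝ, Measurable d → (∀ t, 0 ≤ t → 0 < d t) →
      (∫ t in Set.Ioi (0 : ℝ), Real.exp (-r * t) * d t = 1) →
      IntegrableOn
        (fun t => Real.exp (-r * t) * beta n γ (p t) * (d t ^ (1 - γ) / (1 - γ)))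
        (Set.Ioi 0) →
      ∫ t in Set.Ioi (0 : ℝ), Real.exp (-r * t) * beta n γ (p t) * (d t ^ (1 - γ) / (1 - γ)) ≤
        ∫ t in Set.Ioi (0 : ℝ), Real.exp (-r * t) * beta n γ (p t) * (D t ^ (1 - γ) / (1 - γ))) := by
  have hn1 : 1 ≤ n := by omega
  obtain rfl : D = Dopt n γ r p := hD
  have hbudget := integral_exp_mul_Dopt hn1 hγ hr hcont hmem
  refine ⟨hbudget, fun d _ hd hcost hint => ?_⟩
  have hIoi : ∀ᵐ t ∂volume.restrict (Set.Ioi (0 : ℝ)), 0 ≤ t :=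
    ae_restrict_of_forall_mem measurableSet_Ioi fun t ht => le_of_lt ht
  refine integral_mul_crra_le_of_mul_rpow_neg_eq hγ hγ1
    (c := tontineNormalizer n γ r p ^ γ) (a := fun t => Real.exp (-r * t))
    (b := fun t => Real.exp (-r * t) * beta n γ (p t)) ?_ ?_ ?_ ?_
    (.of_integral_ne_zero (by rw [hcost]; exact one_ne_zero))
    (integrableOn_exp_mul_Dopt hγ hr hcont hmem) hint (hcost.trans hbudget.symm)
  · filter_upwards [hIoi] with t ht
    have := beta_pos hn1 γ (hmem t ht)
    positivity
  · filter_upwards [hIoi] with t ht using hd t ht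
  · filter_upwards [hIoi] with t ht using Dopt_pos hn1 hγ hr hcont hmem ht
  · filter_upwards [hIoi] with t ht
    rw [mul_assoc, beta_mul_Dopt_rpow_neg hn1 hγ hr hcont hmem ht, mul_comm]

/-- The payout `D(t) = β_{n,γ}(ₜp_x)^{1/γ} / ∫_0^∞ e^{-rs} β_{n,γ}(ₛp_x)^{1/γ} ds`
satisfies the tontine budget constraint and maximizes CRRA discounted lifetime utility among
all budget-feasible payout functions. -/
theorem optimal_tontine_CRRA
    (n : ℕ) (hn : 2 ≤ n) (γ : ℝ) (hγ : 0 < γ) (hγ1 : γ ≠ 1)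
    (r : ℝ) (hr : 0 < r)
    (p : ℝ → ℝ) (hcont : Continuous p) (hanti : StrictAntiOn p (Set.Ici 0))
    (hmem : ∀ t, 0 ≤ t → p t ∈ Set.Ioc (0 : ℝ) 1) (hp0 : p 0 = 1)
    (hlim : Filter.Tendsto p Filter.atTop (nhds 0))
    (D : ℝ → ℝ)
    (hD : D = fun t => beta n γ (p t) ^ (1 / γ) /
        ∫ s in Set.Ioi (0 : ℝ), Real.exp (-r * s) * beta n γ (p s) ^ (1 / γ)) :
    (∫ t in Set.Ioi (0 : ℝ), Real.exp (-r * t) * D t = 1) ∧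
    (∀ d : ℝ → ℝ, Measurable d → (∀ t, 0 ≤ t → 0 < d t) →
      (∫ t in Set.Ioi (0 : ℝ), Real.exp (-r * t) * d t = 1) →
      IntegrableOn
        (fun t => Real.exp (-r * t) * beta n γ (p t) * (d t ^ (1 - γ) / (1 - γ)))
        (Set.Ioi 0) →
      ∫ t in Set.Ioi (0 : ℝ), Real.exp (-r * t) * beta n γ (p t) * (d t ^ (1 - γ) / (1 - γ)) ≤
        ∫ t in Set.Ioi (0 : ℝ), Real.exp (-r * t) * beta n γ (p t) * (D t ^ (1 - γ) / (1 - γ))) :=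
  optimal_tontine_CRRA_general n hn γ hγ hγ1 r hr p hcont hmem D hD
end

section
/- For every integer n ≥ 2 and every γ > 0, the function p ↦ β_{n,γ}(p) is strictly increasing on [0,1]; indeed its derivative on (0,1) equals n^{1−γ} · Σ_{k=0}^{n−1} C(n−1,k) p^k (1−p)^{n−1−k} ((k+1)^γ − k^γ) > 0. -/
open MeasureTheory Real Finset

/-!
Since `C(n-1,k) / (k+1) = C(n,k+1) / n`, the function `β_{n,γ}(p)` is `n^{-γ} E[B^γ]` for
`B ~ Bin(n,p)`, i.e. `n^{-γ}` times the Bernstein sum of `j ↦ j^γ` of degree `n`. The derivative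
of a degree-`n` Bernstein sum of `f` is `n` times the degree-`(n-1)` Bernstein sum of the forward
difference `k ↦ f(k+1) - f k`, which for `f j = j^γ` is nonnegative and positive at `k = 0`.
-/

open Polynomial

namespace bernsteinPolynomial

variable {R : Type*} [CommRing R]

theorem derivative_sum_C_mul (n : ℕ) (f : ℕ → R) :
    derivative (∑ j ∈ range (n + 2), C (f j) * bernsteinPolynomial R (n + 1) j)
      = (n + 1 : R[X]) * ∑ k ∈ range (n + 1), C (f (k + 1) - f k) * bernsteinPolynomial R n k := by
  set b := bernsteinPolynomial R n
  have hshift : ∑ k ∈ range (n + 1), C (f (k + 1)) * b (k + 1)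
      = ∑ k ∈ range (n + 1), C (f k) * b k - C (f 0) * b 0 := by
    have hb : b (n + 1) = 0 := eq_zero_of_lt R n.lt_succ_self
    have h := sum_range_succ' (fun k => C (f k) * b k) (n + 1)
    rw [sum_range_succ, hb, mul_zero, add_zero] at h
    rw [h, add_sub_cancel_right]
  have hterm : ∀ k, C (f (k + 1)) * derivative (bernsteinPolynomial R (n + 1) (k + 1))
      = (n + 1 : R[X]) * (C (f (k + 1)) * b k - C (f (k + 1)) * b (k + 1)) := fun k => by
    rw [derivative_succ_aux]; ring
  rw [map_sum, sum_range_succ']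
  simp only [derivative_C_mul, hterm, derivative_zero, Nat.cast_succ, Nat.add_sub_cancel]
  rw [← mul_sum, sum_sub_distrib, hshift]
  simp only [C_sub, sub_mul, sum_sub_distrib]
  ring

end bernsteinPolynomial

noncomputable def bernsteinSum (n : ℕ) (f : ℕ → ℝ) (p : ℝ) : ℝ :=
  ∑ k ∈ range (n + 1), (n.choose k : ℝ) * p ^ k * (1 - p) ^ (n - k) * f k

theorem bernsteinSum_eq_eval (n : ℕ) (f : ℕ → ℝ) (p : ℝ) :
    bernsteinSum n f p = (∑ k ∈ range (n + 1), C (f k) * bernsteinPolynomial ℝ n k).eval p := by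
  simp only [bernsteinSum, eval_finsetSum, eval_mul, eval_C, bernsteinPolynomial, eval_pow,
    eval_sub, eval_one, eval_X, eval_natCast]
  exact sum_congr rfl fun k _ => mul_comm _ _

theorem hasDerivAt_bernsteinSum (n : ℕ) (f : ℕ → ℝ) (p : ℝ) :
    HasDerivAt (bernsteinSum (n + 1) f)
      (((n : ℝ) + 1) * bernsteinSum n (fun k => f (k + 1) - f k) p) p := by
  have h := Polynomial.hasDerivAt (∑ j ∈ range (n + 2), C (f j) * bernsteinPolynomial ℝ (n + 1) j) p
  rw [bernsteinPolynomial.derivative_sum_C_mul, eval_mul, ← bernsteinSum_eq_eval] at h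
  rw [show bernsteinSum (n + 1) f = _ from funext (bernsteinSum_eq_eval (n + 1) f)]
  simpa using h

theorem bernsteinSum_pos {n : ℕ} {f : ℕ → ℝ} (hf : ∀ k, 0 ≤ f k) (hf0 : 0 < f 0) {p : ℝ}
    (hp0 : 0 ≤ p) (hp1 : p < 1) : 0 < bernsteinSum n f p := by
  refine sum_pos' (fun k _ => ?_) ⟨0, mem_range.mpr n.succ_pos, ?_⟩
  · have : 0 ≤ 1 - p := by linarith
    exact mul_nonneg (by positivity) (hf k)
  · have : 0 < 1 - p := by linarith
    simpa using mul_pos (pow_pos this n) hf0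

theorem Real.div_rpow_one_sub {a b : ℝ} (ha : 0 ≤ a) (hb : 0 < b) (γ : ℝ) :
    (a / b) ^ (1 - γ) = a ^ (1 - γ) * b ^ γ / b := by
  rw [div_rpow ha hb.le, rpow_sub hb, rpow_one, div_div_eq_mul_div]

theorem beta_succ_eq {γ : ℝ} (hγ : 0 < γ) (m : ℕ) :
    beta (m + 1) γ = fun q => ((m : ℝ) + 1)⁻¹ * ((m : ℝ) + 1) ^ (1 - γ) *
      bernsteinSum (m + 1) (fun j => (j : ℝ) ^ γ) q := by
  funext q
  rw [beta, theta, bernsteinSum, sum_range_succ' _ (m + 1), Nat.cast_zero, zero_rpow hγ.ne',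
    mul_zero, add_zero, mul_sum, mul_sum]
  refine sum_congr rfl fun k _ => ?_
  have hk : (0 : ℝ) < k + 1 := Nat.cast_add_one_pos k
  have hchoose : ((m + 1).choose (k + 1) : ℝ) = (m + 1) * m.choose k / (k + 1) := by
    rw [eq_div_iff hk.ne']
    exact_mod_cast (Nat.add_one_mul_choose_eq m k).symm
  rw [Nat.add_sub_cancel, Nat.add_sub_add_right, hchoose,
    Real.div_rpow_one_sub (Nat.cast_nonneg (m + 1)) hk γ]
  push_cast
  field_simp
  ring

/-- `p ↦ β_{n,γ}(p)` is strictly increasing on `[0,1]`, and on `(0,1)` its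
derivative equals `n^{1-γ} Σ_k C(n-1,k) p^k (1-p)^{n-1-k} ((k+1)^γ - k^γ)`, which is positive. -/
theorem beta_strictMono
    (n : ℕ) (hn : 2 ≤ n) (γ : ℝ) (hγ : 0 < γ) :
    StrictMonoOn (fun p => beta n γ p) (Set.Icc 0 1) ∧
    ∀ p ∈ Set.Ioo (0 : ℝ) 1,
      HasDerivAt (fun q => beta n γ q)
        ((n : ℝ) ^ (1 - γ) * ∑ k ∈ Finset.range n,
          ((n - 1).choose k : ℝ) * p ^ k * (1 - p) ^ (n - 1 - k) *
            (((k : ℝ) + 1) ^ γ - (k : ℝ) ^ γ)) p ∧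
      0 < (n : ℝ) ^ (1 - γ) * ∑ k ∈ Finset.range n,
          ((n - 1).choose k : ℝ) * p ^ k * (1 - p) ^ (n - 1 - k) *
            (((k : ℝ) + 1) ^ γ - (k : ℝ) ^ γ) := by
  obtain ⟨m, rfl⟩ : ∃ m, n = m + 1 := ⟨n - 1, by omega⟩
  simp only [Nat.add_sub_cancel, Nat.cast_succ]
  set g : ℕ → ℝ := fun k => ((k : ℝ) + 1) ^ γ - (k : ℝ) ^ γ
  have hderiv (p : ℝ) :
      HasDerivAt (beta (m + 1) γ) (((m : ℝ) + 1) ^ (1 - γ) * bernsteinSum m g p) p := by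
    rw [beta_succ_eq hγ]
    refine ((hasDerivAt_bernsteinSum m _ p).const_mul _).congr_deriv ?_
    have hm : (m : ℝ) + 1 ≠ 0 := by positivity
    simp only [Nat.cast_succ, g]
    field_simp
  have hpos {p : ℝ} (hp0 : 0 ≤ p) (hp1 : p < 1) :
      0 < ((m : ℝ) + 1) ^ (1 - γ) * bernsteinSum m g p := by
    refine mul_pos (by positivity) (bernsteinSum_pos (fun k => ?_)
      (by simp [g, zero_rpow hγ.ne']) hp0 hp1)
    exact sub_nonneg.2 (rpow_le_rpow k.cast_nonneg (by linarith) hγ.le)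
  have hcont : Continuous (beta (m + 1) γ) :=
    Differentiable.continuous fun p => (hderiv p).differentiableAt
  refine ⟨strictMonoOn_of_deriv_pos (convex_Icc 0 1) hcont.continuousOn fun p hp => ?_,
    fun p hp => ⟨hderiv p, hpos hp.1.le hp.2⟩⟩
  rw [interior_Icc] at hp
  rw [(hderiv p).deriv]
  exact hpos hp.1.le hp.2
end

section
/- For every integer n ≥ 2, every γ > 0 with γ ≠ 1, and every p ∈ (0,1): β_{n,γ}(p) < p^γ if 0 < γ < 1, and β_{n,γ}(p) > p^γ if γ > 1. -/
open MeasureTheory Real Finset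

/-
Write `N = K + 1` with `K ~ Bin(n - 1, p)`, so that `θ_{n,γ}(p) = E[Z^{1-γ}]` with `Z = n / N`.
Since `n/(k+1) · C(n-1,k) = C(n,k+1)`, the binomial theorem gives `E[Z] = (1 - (1-p)^n) / p`.
Jensen's inequality for `x ↦ x^{1-γ}` (concave for `γ ≤ 1`, convex for `γ ≥ 1`) then compares
`β_{n,γ}(p) = p θ_{n,γ}(p)` with `p · E[Z]^{1-γ} = p^γ (1 - (1-p)^n)^{1-γ}`, and the last factor
is `< 1` for `γ < 1` and `> 1` for `γ > 1`.
-/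

open Set

lemma convexOn_rpow_of_nonpos {c : ℝ} (hc : c ≤ 0) : ConvexOn ℝ (Ioi 0) fun x : ℝ ↦ x ^ c := by
  have himage : log '' Ioi 0 = univ := eq_univ_of_forall fun y ↦ ⟨exp y, exp_pos y, log_exp y⟩
  have hexp : ConvexOn ℝ (log '' Ioi 0) fun y : ℝ ↦ exp (c * y) :=
    himage ▸ convexOn_exp.comp_linearMap (LinearMap.mul ℝ ℝ c)
  have hanti : AntitoneOn (fun y : ℝ ↦ exp (c * y)) (log '' Ioi 0) :=
    fun a _ b _ hab ↦ exp_le_exp.2 (mul_le_mul_of_nonpos_left hab hc)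
  refine (hexp.comp_concaveOn strictConcaveOn_log_Ioi.concaveOn hanti).congr fun x hx ↦ ?_
  simp [rpow_def_of_pos hx, mul_comm]

noncomputable def binomWeight (m : ℕ) (p : ℝ) (k : ℕ) : ℝ :=
  m.choose k * p ^ k * (1 - p) ^ (m - k)

lemma binomWeight_nonneg {p : ℝ} (hp₀ : 0 ≤ p) (hp₁ : p ≤ 1) (m k : ℕ) :
    0 ≤ binomWeight m p k := by
  have : 0 ≤ 1 - p := by linarith
  unfold binomWeight; positivity

lemma sum_binomWeight (m : ℕ) (p : ℝ) : ∑ k ∈ range (m + 1), binomWeight m p k = 1 := by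
  simpa [binomWeight, mul_assoc, mul_comm, mul_left_comm] using (add_pow p (1 - p) m).symm

lemma mul_sum_binomWeight_mul_div_succ (m : ℕ) (p : ℝ) :
    p * ∑ k ∈ range (m + 1), binomWeight m p k * ((m + 1) / (k + 1)) = 1 - (1 - p) ^ (m + 1) := by
  have hterm (k : ℕ) : p * (binomWeight m p k * ((m + 1) / (k + 1))) =
      p ^ (k + 1) * (1 - p) ^ (m + 1 - (k + 1)) * (m + 1).choose (k + 1) := by
    have hchoose : ((m + 1 : ℕ) : ℝ) * m.choose k = (m + 1).choose (k + 1) * (k + 1) := by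
      exact_mod_cast Nat.add_one_mul_choose_eq m k
    push_cast at hchoose
    rw [binomWeight, Nat.add_sub_add_right, pow_succ]
    field_simp
    linear_combination p * p ^ k * (1 - p) ^ (m - k) * hchoose
  have h := add_pow p (1 - p) (m + 1)
  rw [add_sub_cancel, one_pow, sum_range_succ'] at h
  simp only [pow_zero, Nat.sub_zero, Nat.choose_zero_right, Nat.cast_one, mul_one, one_mul] at h
  rw [mul_sum, sum_congr rfl fun k _ ↦ hterm k]
  linarith

lemma theta_succ (m : ℕ) (γ p : ℝ) :
    theta (m + 1) γ p = ∑ k ∈ range (m + 1), binomWeight m p k * ((m + 1) / (k + 1)) ^ (1 - γ) := by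
  simp [theta, binomWeight]

lemma sum_binomWeight_smul_succ_div_succ {m : ℕ} {p : ℝ} (hp : p ≠ 0) :
    ∑ k ∈ range (m + 1), binomWeight m p k • ((m + 1 : ℝ) / (k + 1)) =
      (1 - (1 - p) ^ (m + 1)) / p := by
  rw [eq_div_iff hp, mul_comm, ← mul_sum_binomWeight_mul_div_succ m p]
  rfl

lemma theta_succ_le {m : ℕ} {γ p : ℝ} (hp₀ : 0 < p) (hp₁ : p ≤ 1) (hγ₀ : 0 ≤ γ) (hγ₁ : γ ≤ 1) :
    theta (m + 1) γ p ≤ ((1 - (1 - p) ^ (m + 1)) / p) ^ (1 - γ) := by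
  rw [theta_succ, ← sum_binomWeight_smul_succ_div_succ hp₀.ne']
  exact (concaveOn_rpow (by linarith) (by linarith)).le_map_sum
    (fun k _ ↦ binomWeight_nonneg hp₀.le hp₁ m k) (sum_binomWeight m p)
    (fun k _ ↦ mem_Ici.2 (by positivity))

lemma le_theta_succ {m : ℕ} {γ p : ℝ} (hp₀ : 0 < p) (hp₁ : p ≤ 1) (hγ : 1 ≤ γ) :
    ((1 - (1 - p) ^ (m + 1)) / p) ^ (1 - γ) ≤ theta (m + 1) γ p := by
  rw [theta_succ, ← sum_binomWeight_smul_succ_div_succ hp₀.ne']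
  exact (convexOn_rpow_of_nonpos (by linarith)).map_sum_le
    (fun k _ ↦ binomWeight_nonneg hp₀.le hp₁ m k) (sum_binomWeight m p)
    (fun k _ ↦ mem_Ioi.2 (by positivity))

lemma mul_div_rpow_one_sub {p a : ℝ} (hp : 0 < p) (ha : 0 ≤ a) (γ : ℝ) :
    p * (a / p) ^ (1 - γ) = p ^ γ * a ^ (1 - γ) := by
  rw [div_rpow ha hp.le, rpow_sub hp, rpow_one]
  field_simp

theorem beta_vs_p_rpow_general
    (n : ℕ) (hn : 2 ≤ n) (γ : ℝ) (hγ : 0 < γ)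
    (p : ℝ) (hp : p ∈ Set.Ioo (0 : ℝ) 1) :
    (γ < 1 → beta n γ p < p ^ γ) ∧ (1 < γ → p ^ γ < beta n γ p) := by
  obtain ⟨hp₀, hp₁⟩ := hp
  obtain ⟨m, rfl⟩ : ∃ m, n = m + 1 := ⟨n - 1, by omega⟩
  set a := 1 - (1 - p) ^ (m + 1)
  have ha₀ : 0 < a := sub_pos.2 (pow_lt_one₀ (by linarith) (by linarith) (by omega))
  have ha₁ : a < 1 := sub_lt_self 1 (pow_pos (sub_pos.2 hp₁) _)
  have hpγ : 0 < p ^ γ := rpow_pos_of_pos hp₀ γ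
  constructor
  · intro hγ₁
    calc beta (m + 1) γ p ≤ p * (a / p) ^ (1 - γ) :=
          mul_le_mul_of_nonneg_left (theta_succ_le hp₀ hp₁.le hγ.le hγ₁.le) hp₀.le
      _ = p ^ γ * a ^ (1 - γ) := mul_div_rpow_one_sub hp₀ ha₀.le γ
      _ < p ^ γ := mul_lt_of_lt_one_right hpγ (rpow_lt_one ha₀.le ha₁ (by linarith))
  · intro hγ₁
    calc p ^ γ < p ^ γ * a ^ (1 - γ) :=
          lt_mul_of_one_lt_right hpγ (one_lt_rpow_of_pos_of_lt_one_of_neg ha₀ ha₁ (by linarith))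
      _ = p * (a / p) ^ (1 - γ) := (mul_div_rpow_one_sub hp₀ ha₀.le γ).symm
      _ ≤ beta (m + 1) γ p := mul_le_mul_of_nonneg_left (le_theta_succ hp₀ hp₁.le hγ₁.le) hp₀.le

/-- for `0 < p < 1`, `β_{n,γ}(p) < p^γ` when `0 < γ < 1`, and
`β_{n,γ}(p) > p^γ` when `γ > 1`. -/
theorem beta_vs_p_rpow
    (n : ℕ) (hn : 2 ≤ n) (γ : ℝ) (hγ : 0 < γ) (hγ1 : γ ≠ 1)
    (p : ℝ) (hp : p ∈ Set.Ioo (0 : ℝ) 1) :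
    (γ < 1 → beta n γ p < p ^ γ) ∧ (1 < γ → p ^ γ < beta n γ p) :=
  beta_vs_p_rpow_general n hn γ hγ p hp
end

section
/- For every integer n ≥ 2, define R_γ(p) = β_{n,γ}(p)^{1/γ}/p for p ∈ (0,1). Then p ↦ R_γ(p) is strictly increasing on (0,1) if 0 < γ < 1, and strictly decreasing on (0,1) if γ > 1 (and constant equal to 1 if γ = 1). -/
open MeasureTheory Real Finset

/-!
Since `R_γ(p)^γ = β(p) p^{-γ}`, the claim is about the sign of `p β'(p) - γ β(p)`. Writing `β` as a
sum against binomial weights and shifting the index with `(k+1) C(m, k+1) = (m-k) C(m, k)`, one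
finds `p β' - γ β = n^{1-γ} Σ_k C(m,k) p^{k+1} (1-p)^{m-k} g(k)` with `m = n - 1` and
`g(k) = (k+1)^γ - γ (k+1)^{γ-1} - k^γ`, the gap at `k` between `x ↦ x^γ` and its tangent at `k+1`.
By Bernoulli's inequality `g > 0` for `γ < 1` (concavity) and `g < 0` for `γ > 1` (convexity).
For `γ = 1` the binomial theorem gives `θ ≡ 1`, hence `β(p) = p`.
-/

lemma sum_range_sub_mul_choose_mul_succ {R : Type*} [CommSemiring R] (m : ℕ) (f : ℕ → R) :
    ∑ k ∈ range (m + 1), ((m - k : ℕ) : R) * m.choose k * f (k + 1) =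
      ∑ k ∈ range (m + 1), (k : R) * m.choose k * f k := by
  rw [sum_range_succ, sum_range_succ' _ m]
  simp only [Nat.sub_self, Nat.cast_zero, zero_mul, add_zero]
  refine sum_congr rfl fun k _ => ?_
  rw [← Nat.cast_mul, mul_comm (m - k), ← Nat.choose_succ_right_eq, Nat.cast_mul]
  ring

lemma hasDerivAt_sum_choose_mul_pow_mul_one_sub_pow (m : ℕ) (g : ℕ → ℝ) (p : ℝ) :
    HasDerivAt
      (fun x => ∑ k ∈ range (m + 1), m.choose k * g (k + 1) * x ^ (k + 1) * (1 - x) ^ (m - k))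
      (∑ k ∈ range (m + 1),
        m.choose k * (((k : ℝ) + 1) * g (k + 1) - k * g k) * p ^ k * (1 - p) ^ (m - k)) p := by
  have hterm k : HasDerivAt (fun x => m.choose k * g (k + 1) * x ^ (k + 1) * (1 - x) ^ (m - k))
      (((k : ℝ) + 1) * m.choose k * g (k + 1) * p ^ k * (1 - p) ^ (m - k) -
        ((m - k : ℕ) : ℝ) * m.choose k * (g (k + 1) * p ^ (k + 1) * (1 - p) ^ (m - (k + 1))))
      p := by
    refine (((hasDerivAt_pow (k + 1) p).const_mul (m.choose k * g (k + 1) : ℝ)).mul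
      (((hasDerivAt_id p).const_sub 1).pow (m - k))).congr_deriv ?_
    simp only [Nat.add_sub_cancel, Nat.sub_sub, id, Pi.pow_apply]
    push_cast
    ring
  refine (HasDerivAt.fun_sum fun k _ => hterm k).congr_deriv ?_
  rw [sum_sub_distrib,
    sum_range_sub_mul_choose_mul_succ m (fun j => g j * p ^ j * (1 - p) ^ (m - j)),
    ← sum_sub_distrib]
  refine sum_congr rfl fun k _ => ?_
  ring

lemma self_mul_rpow_sub_one {x γ : ℝ} (hx : 0 ≤ x) (hγ : γ ≠ 0) : x * x ^ (γ - 1) = x ^ γ := by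
  rw [mul_comm, ← rpow_add_one' hx (by simpa using hγ), sub_add_cancel]

noncomputable def tangentGap (γ x : ℝ) : ℝ := (x + 1) ^ γ - γ * (x + 1) ^ (γ - 1) - x ^ γ

lemma tangentGap_pos {γ x : ℝ} (hγ₀ : 0 < γ) (hγ₁ : γ < 1) (hx : 0 ≤ x) :
    0 < tangentGap γ x := by
  rw [tangentGap, sub_pos]
  have hx₁ : 0 < x + 1 := by linarith
  have h := rpow_one_add_lt_one_add_mul_self (s := -1 / (x + 1))
    (by rw [le_div_iff₀ hx₁]; linarith) (by simp; linarith) hγ₀ hγ₁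
  rw [show 1 + -1 / (x + 1) = x / (x + 1) by field_simp; ring, div_rpow hx hx₁.le,
    div_lt_iff₀ (rpow_pos_of_pos hx₁ γ)] at h
  rw [rpow_sub_one hx₁.ne']
  exact h.trans_eq (by ring)

lemma tangentGap_neg {γ x : ℝ} (hγ : 1 < γ) (hx : 0 ≤ x) : tangentGap γ x < 0 := by
  rw [tangentGap, sub_neg]
  have hx₁ : 0 < x + 1 := by linarith
  have h := one_add_mul_self_lt_rpow_one_add (s := -1 / (x + 1))
    (by rw [le_div_iff₀ hx₁]; linarith) (by simp; linarith) hγ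
  rw [show 1 + -1 / (x + 1) = x / (x + 1) by field_simp; ring, div_rpow hx hx₁.le,
    lt_div_iff₀ (rpow_pos_of_pos hx₁ γ)] at h
  rw [rpow_sub_one hx₁.ne']
  exact lt_of_eq_of_lt (by ring) h

lemma beta_nonneg (n : ℕ) (γ : ℝ) {p : ℝ} (hp₀ : 0 ≤ p) (hp₁ : p ≤ 1) : 0 ≤ beta n γ p := by
  have := sub_nonneg.2 hp₁
  unfold beta theta
  positivity

lemma theta_succ_one (m : ℕ) (p : ℝ) : theta (m + 1) 1 p = 1 :=
  calc theta (m + 1) 1 p = (p + (1 - p)) ^ m := by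
        rw [add_pow]
        refine sum_congr rfl fun k _ => ?_
        simp only [sub_self, rpow_zero, Nat.add_sub_cancel]
        ring
    _ = 1 := by simp

lemma beta_succ_eq_sum (m : ℕ) (γ p : ℝ) :
    beta (m + 1) γ p = ((m : ℝ) + 1) ^ (1 - γ) * ∑ k ∈ range (m + 1),
      m.choose k * ((k + 1 : ℕ) : ℝ) ^ (γ - 1) * p ^ (k + 1) * (1 - p) ^ (m - k) := by
  rw [beta, theta, mul_sum, mul_sum]
  refine sum_congr rfl fun k _ => ?_
  rw [div_rpow (by positivity) (by positivity), show γ - 1 = -(1 - γ) by ring,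
    rpow_neg (by positivity), Nat.add_sub_cancel]
  push_cast
  ring

lemma hasDerivAt_beta_succ {γ : ℝ} (m : ℕ) (hγ : γ ≠ 0) (p : ℝ) :
    HasDerivAt (beta (m + 1) γ) (((m : ℝ) + 1) ^ (1 - γ) * ∑ k ∈ range (m + 1),
      m.choose k * (((k : ℝ) + 1) ^ γ - (k : ℝ) ^ γ) * p ^ k * (1 - p) ^ (m - k)) p := by
  rw [show beta (m + 1) γ = _ from funext (beta_succ_eq_sum m γ)]
  refine ((hasDerivAt_sum_choose_mul_pow_mul_one_sub_pow m (fun j => (j : ℝ) ^ (γ - 1)) p).const_mul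
    _).congr_deriv (congrArg _ (sum_congr rfl fun k _ => ?_))
  push_cast
  rw [self_mul_rpow_sub_one (by positivity) hγ, self_mul_rpow_sub_one (by positivity) hγ]

lemma hasDerivAt_beta_succ_mul_rpow_neg {γ p : ℝ} (m : ℕ) (hγ : γ ≠ 0) (hp : 0 < p) :
    HasDerivAt (fun x => beta (m + 1) γ x * x ^ (-γ))
      (p ^ (-γ - 1) * (((m : ℝ) + 1) ^ (1 - γ) * ∑ k ∈ range (m + 1),
        m.choose k * p ^ (k + 1) * (1 - p) ^ (m - k) * tangentGap γ k)) p := by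
  refine ((hasDerivAt_beta_succ m hγ p).mul (hasDerivAt_rpow_const (Or.inl hp.ne'))).congr_deriv ?_
  have hsplit : p ^ (-γ) = p ^ (-γ - 1) * p := by rw [← rpow_add_one hp.ne', sub_add_cancel]
  rw [hsplit, beta_succ_eq_sum]
  simp only [mul_sum, sum_mul, ← sum_add_distrib]
  refine sum_congr rfl fun k _ => ?_
  push_cast
  rw [tangentGap]
  ring

lemma choose_mul_pow_mul_one_sub_pow_pos {m k : ℕ} {p : ℝ} (hk : k ∈ range (m + 1))
    (hp : p ∈ Set.Ioo 0 1) : 0 < m.choose k * p ^ (k + 1) * (1 - p) ^ (m - k) := by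
  have : (0 : ℝ) < m.choose k := Nat.cast_pos.2 (Nat.choose_pos (mem_range_succ_iff.1 hk))
  have := hp.1
  have := sub_pos.2 hp.2
  positivity

lemma strictMonoOn_beta_succ_mul_rpow_neg {γ : ℝ} (m : ℕ) (hγ₀ : 0 < γ) (hγ₁ : γ < 1) :
    StrictMonoOn (fun x => beta (m + 1) γ x * x ^ (-γ)) (Set.Ioo 0 1) := by
  have hderiv p (hp : 0 < p) := hasDerivAt_beta_succ_mul_rpow_neg m hγ₀.ne' hp
  refine strictMonoOn_of_deriv_pos (convex_Ioo 0 1)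
    (fun p hp => (hderiv p hp.1).continuousAt.continuousWithinAt) fun p hp => ?_
  rw [interior_Ioo] at hp
  rw [(hderiv p hp.1).deriv]
  exact mul_pos (rpow_pos_of_pos hp.1 _) <| mul_pos (by positivity) <|
    sum_pos (fun k hk => mul_pos (choose_mul_pow_mul_one_sub_pow_pos hk hp)
      (tangentGap_pos hγ₀ hγ₁ k.cast_nonneg)) nonempty_range_add_one

lemma strictAntiOn_beta_succ_mul_rpow_neg {γ : ℝ} (m : ℕ) (hγ : 1 < γ) :
    StrictAntiOn (fun x => beta (m + 1) γ x * x ^ (-γ)) (Set.Ioo 0 1) := by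
  have hderiv p (hp : 0 < p) := hasDerivAt_beta_succ_mul_rpow_neg m (by positivity) hp
  refine strictAntiOn_of_deriv_neg (convex_Ioo 0 1)
    (fun p hp => (hderiv p hp.1).continuousAt.continuousWithinAt) fun p hp => ?_
  rw [interior_Ioo] at hp
  rw [(hderiv p hp.1).deriv]
  exact mul_neg_of_pos_of_neg (rpow_pos_of_pos hp.1 _) <| mul_neg_of_pos_of_neg (by positivity) <|
    sum_neg (fun k hk => mul_neg_of_pos_of_neg (choose_mul_pow_mul_one_sub_pow_pos hk hp)
      (tangentGap_neg hγ k.cast_nonneg)) nonempty_range_add_one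

lemma beta_rpow_one_div_div_eq {n : ℕ} {γ p : ℝ} (hγ : γ ≠ 0) (hp : p ∈ Set.Ioo 0 1) :
    beta n γ p ^ (1 / γ) / p = (beta n γ p * p ^ (-γ)) ^ (1 / γ) := by
  rw [mul_rpow (beta_nonneg n γ hp.1.le hp.2.le) (rpow_nonneg hp.1.le _), ← rpow_mul hp.1.le,
    neg_mul, mul_one_div_cancel hγ, rpow_neg_one, div_eq_mul_inv]

/-- `p ↦ R_γ(p) = β_{n,γ}(p)^{1/γ}/p` is strictly increasing on `(0,1)` when
`0 < γ < 1`, strictly decreasing when `γ > 1`, and constantly `1` when `γ = 1`. -/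
theorem R_monotone_in_p
    (n : ℕ) (hn : 2 ≤ n) (γ : ℝ) (hγ : 0 < γ) :
    (γ < 1 → StrictMonoOn (fun p => (beta n γ p) ^ (1 / γ) / p) (Set.Ioo 0 1)) ∧
    (1 < γ → StrictAntiOn (fun p => (beta n γ p) ^ (1 / γ) / p) (Set.Ioo 0 1)) ∧
    (γ = 1 → ∀ p ∈ Set.Ioo (0 : ℝ) 1, (beta n γ p) ^ (1 / γ) / p = 1) := by
  obtain ⟨m, rfl⟩ : ∃ m, n = m + 1 := ⟨n - 1, by omega⟩
  have hR : Set.EqOn (fun p => (beta (m + 1) γ p * p ^ (-γ)) ^ (1 / γ))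
      (fun p => beta (m + 1) γ p ^ (1 / γ) / p) (Set.Ioo 0 1) :=
    fun p hp => (beta_rpow_one_div_div_eq hγ.ne' hp).symm
  have hroot := strictMonoOn_rpow_Ici_of_exponent_pos (one_div_pos.2 hγ)
  have hmaps : Set.MapsTo (fun p => beta (m + 1) γ p * p ^ (-γ)) (Set.Ioo 0 1) (Set.Ici 0) :=
    fun p hp => mul_nonneg (beta_nonneg _ γ hp.1.le hp.2.le) (rpow_nonneg hp.1.le _)
  refine ⟨fun hγ₁ => ?_, fun hγ₁ => ?_, ?_⟩
  · exact (hroot.comp (strictMonoOn_beta_succ_mul_rpow_neg m hγ hγ₁) hmaps).congr hR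
  · exact (hroot.comp_strictAntiOn (strictAntiOn_beta_succ_mul_rpow_neg m hγ₁) hmaps).congr hR
  · rintro rfl p hp
    simp [beta, theta_succ_one, hp.1.ne']
end

section
/- Fix an integer n ≥ 2, γ > 0, a rate r > 0, and a survival function t ↦ ₜp_x : [0,∞) → (0,1] which is continuous, strictly decreasing, with ₀p_x = 1 and ₜp_x → 0 as t → ∞. Then for every t > 0, 1 − e^{−rt} < Δ_{n,γ}(t). In other words, the flat (historical) tontine with constant payout rate r, which is the limit of the optimal tontine as the risk aversion γ₁ → ∞, has strictly smaller cumulative discounted payout at every positive time than the optimal tontine for any finite risk aversion γ. -/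
/-! Since `C(n-1,k) · n/(k+1) = C(n,k+1)`, `β(p) = E[(M/n)^γ]` with `M ~ Bin(n, p)`: a Bernstein
polynomial with strictly increasing coefficients, hence strictly increasing on `[0,1]`. So the
optimal payout is proportional to the weight `w(s) = β(ₛp_x)^{1/γ}`, which strictly decreases in
time. A strictly decreasing weight puts a larger share of its discounted mass `∫ e^{-rs} w(s) ds`
on `[0,t]` than the flat weight does, because it exceeds `w(t)` on `[0,t)` and is at most `w(t)`
beyond `t`. -/

open MeasureTheory Real Finset

section Bernstein

open Polynomial

theorem derivative_sum_bernsteinPolynomial {R : Type*} [CommRing R] (f : ℕ → R) (m : ℕ) :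
    derivative (∑ j ∈ range (m + 2), C (f j) * bernsteinPolynomial R (m + 1) j) =
      (m + 1 : R[X]) * ∑ j ∈ range (m + 1), C (f (j + 1) - f j) * bernsteinPolynomial R m j := by
  rw [sum_range_succ']
  simp only [derivative_add, derivative_sum, derivative_C_mul, bernsteinPolynomial.derivative_succ,
    bernsteinPolynomial.derivative_zero, Nat.add_sub_cancel, C_sub, sub_mul, mul_sub,
    sum_sub_distrib, mul_left_comm (C _) ((↑(m + 1)) : R[X]), ← mul_sum]
  rw [sum_range_succ' (fun j => C (f j) * bernsteinPolynomial R m j),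
    sum_range_succ (fun j => C (f (j + 1)) * bernsteinPolynomial R m (j + 1)),
    bernsteinPolynomial.eq_zero_of_lt R (Nat.lt_succ_self m)]
  push_cast
  ring

theorem bernsteinPolynomial_eval_pos {n ν : ℕ} (h : ν ≤ n) {x : ℝ} (hx : x ∈ Set.Ioo 0 1) :
    0 < (bernsteinPolynomial ℝ n ν).eval x := by
  have : 0 < 1 - x := sub_pos.mpr hx.2
  have := hx.1
  have : (0 : ℝ) < n.choose ν := by exact_mod_cast Nat.choose_pos h
  simp only [bernsteinPolynomial, eval_mul, eval_pow, eval_sub, eval_one, eval_X, eval_natCast]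
  positivity

theorem strictMonoOn_sum_bernsteinPolynomial {f : ℕ → ℝ} (hf : Monotone f) (h01 : f 0 < f 1)
    (m : ℕ) : StrictMonoOn
      (fun x => ∑ j ∈ range (m + 2), f j * (bernsteinPolynomial ℝ (m + 1) j).eval x)
      (Set.Icc 0 1) := by
  have hderiv (x : ℝ) := by
    simpa only [eval_finsetSum, eval_mul, eval_C, eval_add, eval_natCast, eval_one,
      derivative_sum_bernsteinPolynomial] using
      (Polynomial.hasDerivAt (∑ j ∈ range (m + 2), C (f j) * bernsteinPolynomial ℝ (m + 1) j) x)
  refine strictMonoOn_of_deriv_pos (convex_Icc 0 1)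
    (continuous_iff_continuousAt.2 fun x => (hderiv x).continuousAt).continuousOn fun x hx => ?_
  rw [interior_Icc] at hx
  rw [(hderiv x).deriv]
  refine mul_pos (by positivity) (sum_pos' (fun j hj => ?_) ⟨0, by simp, ?_⟩)
  · exact mul_nonneg (sub_nonneg.2 (hf j.le_succ))
      (bernsteinPolynomial_eval_pos (mem_range_succ_iff.1 hj) hx).le
  · exact mul_pos (sub_pos.2 h01) (bernsteinPolynomial_eval_pos m.zero_le hx)

theorem beta_succ_eq_sum_bernsteinPolynomial (m : ℕ) {γ : ℝ} (hγ : γ ≠ 0) (x : ℝ) :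
    beta (m + 1) γ x =
      ∑ j ∈ range (m + 2), ((j : ℝ) / (m + 1)) ^ γ * (bernsteinPolynomial ℝ (m + 1) j).eval x := by
  rw [sum_range_succ', Nat.cast_zero, zero_div, zero_rpow hγ, zero_mul, add_zero, beta, theta,
    mul_sum]
  refine sum_congr rfl fun k _ => ?_
  have hcoef : (m.choose k : ℝ) * ((m + 1) / (k + 1)) = (m + 1).choose (k + 1) := by
    rw [mul_div_assoc', div_eq_iff (by positivity), mul_comm _ ((m : ℝ) + 1)]
    exact_mod_cast Nat.add_one_mul_choose_eq m k
  have hrpow : ((m + 1 : ℝ) / (k + 1)) ^ (1 - γ) = (m + 1) / (k + 1) * ((k + 1) / (m + 1)) ^ γ := by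
    rw [rpow_sub (by positivity), rpow_one, div_eq_mul_inv _ (_ ^ γ), ← inv_rpow (by positivity),
      inv_div]
  simp only [bernsteinPolynomial, eval_mul, eval_pow, eval_sub, eval_one, eval_X, eval_natCast,
    Nat.add_sub_cancel, Nat.add_sub_add_right]
  push_cast
  rw [hrpow]
  linear_combination x ^ (k + 1) * (1 - x) ^ (m - k) * ((k + 1) / (m + 1)) ^ γ * hcoef

end Bernstein

theorem beta_strictMonoOn {n : ℕ} (hn : 1 ≤ n) {γ : ℝ} (hγ : 0 < γ) :
    StrictMonoOn (beta n γ) (Set.Icc 0 1) := by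
  obtain ⟨m, rfl⟩ := Nat.exists_eq_add_of_le' hn
  have hf : Monotone fun j : ℕ => ((j : ℝ) / (m + 1)) ^ γ := fun a b hab =>
    rpow_le_rpow (by positivity) (by gcongr) hγ.le
  have h01 : ((0 : ℕ) / (m + 1) : ℝ) ^ γ < ((1 : ℕ) / (m + 1) : ℝ) ^ γ := by
    rw [Nat.cast_zero, zero_div, zero_rpow hγ.ne']
    positivity
  convert strictMonoOn_sum_bernsteinPolynomial hf h01 m using 1
  exact funext (beta_succ_eq_sum_bernsteinPolynomial m hγ.ne')

theorem integrableOn_exp_neg_mul_mul_of_antitoneOn {w : ℝ → ℝ} {r : ℝ} (a : ℝ) (hr : 0 < r)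
    (hw : ∀ s, a ≤ s → 0 ≤ w s) (hanti : AntitoneOn w (Set.Ici a)) :
    IntegrableOn (fun s => exp (-r * s) * w s) (Set.Ioi a) := by
  refine Integrable.mono' ((exp_neg_integrableOn_Ioi a hr).const_mul (w a)) ?_ ?_
  · exact (continuous_exp.comp (continuous_const.mul continuous_id)).aestronglyMeasurable.mul
      (aemeasurable_restrict_of_antitoneOn measurableSet_Ioi
        (hanti.mono Set.Ioi_subset_Ici_self)).aestronglyMeasurable
  · refine (ae_restrict_iff' measurableSet_Ioi).2 (Filter.Eventually.of_forall fun s hs => ?_)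
    rw [norm_of_nonneg (mul_nonneg (exp_nonneg _) (hw s (le_of_lt hs))), mul_comm (w a)]
    exact mul_le_mul_of_nonneg_left (hanti Set.self_mem_Ici (Set.mem_Ici.2 hs.le) hs.le)
      (exp_nonneg _)

theorem integral_exp_neg_mul_Ioi {r : ℝ} (hr : 0 < r) (c : ℝ) :
    ∫ s in Set.Ioi c, exp (-r * s) = exp (-r * c) / r := by
  rw [integral_exp_mul_Ioi (neg_lt_zero.2 hr), div_neg, neg_div, neg_neg]

theorem integral_exp_neg_mul {r : ℝ} (hr : r ≠ 0) (t : ℝ) :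
    ∫ s in (0 : ℝ)..t, exp (-r * s) = (1 - exp (-r * t)) / r := by
  rw [intervalIntegral.integral_comp_mul_left (fun x => exp x) (neg_ne_zero.2 hr), integral_exp,
    mul_zero, exp_zero, smul_eq_mul]
  field_simp
  ring

theorem mul_integral_exp_neg_mul_lt_of_strictAntiOn {w : ℝ → ℝ} {r t : ℝ} (hr : r ≠ 0)
    (ht : 0 < t) (hanti : StrictAntiOn w (Set.Icc 0 t)) :
    w t * ((1 - exp (-r * t)) / r) < ∫ s in (0 : ℝ)..t, exp (-r * s) * w s := by
  have hg : IntervalIntegrable (fun s => exp (-r * s) * w s) volume 0 t :=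
    (hanti.antitoneOn.mono (Set.uIcc_of_le ht.le).le).intervalIntegrable.continuousOn_mul
      (by fun_prop)
  have hexp : IntervalIntegrable (fun s => w t * exp (-r * s)) volume 0 t :=
    (Continuous.intervalIntegrable (by fun_prop) 0 t).const_mul _
  have hpos : 0 < ∫ s in (0 : ℝ)..t, (exp (-r * s) * w s - w t * exp (-r * s)) := by
    refine intervalIntegral.intervalIntegral_pos_of_pos_on (hg.sub hexp) (fun s hs => ?_) ht
    have := hanti ⟨hs.1.le, hs.2.le⟩ ⟨ht.le, le_rfl⟩ hs.2
    have := exp_pos (-r * s)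
    nlinarith
  rw [intervalIntegral.integral_sub hg hexp, intervalIntegral.integral_const_mul,
    integral_exp_neg_mul hr] at hpos
  linarith

theorem integral_Ioi_exp_neg_mul_le_of_antitoneOn {w : ℝ → ℝ} {r t : ℝ} (hr : 0 < r)
    (hanti : AntitoneOn w (Set.Ici t))
    (hint : IntegrableOn (fun s => exp (-r * s) * w s) (Set.Ioi t)) :
    ∫ s in Set.Ioi t, exp (-r * s) * w s ≤ w t * (exp (-r * t) / r) := by
  rw [← integral_exp_neg_mul_Ioi hr, ← integral_const_mul]
  refine setIntegral_mono_on hint ((exp_neg_integrableOn_Ioi t hr).const_mul (w t))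
    measurableSet_Ioi fun s hs => ?_
  rw [mul_comm (w t)]
  exact mul_le_mul_of_nonneg_left (hanti Set.self_mem_Ici (Set.mem_Ici.2 hs.le) hs.le)
    (exp_nonneg _)

theorem one_sub_exp_lt_integral_div_of_strictAntiOn {w : ℝ → ℝ} {r t : ℝ} (hr : 0 < r)
    (ht : 0 < t) (hw : ∀ s, 0 ≤ s → 0 ≤ w s) (hanti : StrictAntiOn w (Set.Ici 0)) :
    1 - exp (-r * t) <
      (∫ s in (0 : ℝ)..t, exp (-r * s) * w s) / ∫ s in Set.Ioi (0 : ℝ), exp (-r * s) * w s := by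
  have hg : IntegrableOn (fun s => exp (-r * s) * w s) (Set.Ioi 0) :=
    integrableOn_exp_neg_mul_mul_of_antitoneOn 0 hr hw hanti.antitoneOn
  have hg_tail := hg.mono_set (Set.Ioi_subset_Ioi ht.le)
  have hhead := mul_integral_exp_neg_mul_lt_of_strictAntiOn hr.ne' ht
    (hanti.mono Set.Icc_subset_Ici_self)
  have htail := integral_Ioi_exp_neg_mul_le_of_antitoneOn hr
    (hanti.antitoneOn.mono (Set.Ici_subset_Ici.2 ht.le)) hg_tail
  have htail_nonneg : 0 ≤ ∫ s in Set.Ioi t, exp (-r * s) * w s :=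
    setIntegral_nonneg measurableSet_Ioi fun s hs =>
      mul_nonneg (exp_nonneg _) (hw s (ht.trans hs).le)
  set E := exp (-r * t)
  have hE_pos : 0 < E := exp_pos _
  have hE_lt : E < 1 := exp_lt_one_iff.2 (by nlinarith)
  have hhead_pos : 0 < ∫ s in (0 : ℝ)..t, exp (-r * s) * w s :=
    (mul_nonneg (hw t ht.le) (div_pos (sub_pos.2 hE_lt) hr).le).trans_lt hhead
  rw [← intervalIntegral.integral_interval_add_Ioi hg hg_tail,
    lt_div_iff₀ (add_pos_of_pos_of_nonneg hhead_pos htail_nonneg)]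
  have h1 := mul_le_mul_of_nonneg_left htail (sub_pos.2 hE_lt).le
  have h2 := mul_lt_mul_of_pos_left hhead hE_pos
  have h3 : (1 - E) * (w t * (E / r)) = E * (w t * ((1 - E) / r)) := by ring
  linarith

theorem Delta_eq_div (n : ℕ) (γ r : ℝ) (p : ℝ → ℝ) (t : ℝ) :
    Delta n γ r p t = (∫ s in (0 : ℝ)..t, exp (-r * s) * beta n γ (p s) ^ (1 / γ)) /
      ∫ s in Set.Ioi (0 : ℝ), exp (-r * s) * beta n γ (p s) ^ (1 / γ) := by
  simp only [Delta, Dopt, ← intervalIntegral.integral_div, mul_div_assoc]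

theorem flat_tontine_depletes_slower_general
    (n : ℕ) (hn : 2 ≤ n) (γ : ℝ) (hγ : 0 < γ)
    (r : ℝ) (hr : 0 < r)
    (p : ℝ → ℝ) (hanti : StrictAntiOn p (Set.Ici 0))
    (hmem : ∀ t, 0 ≤ t → p t ∈ Set.Ioc (0 : ℝ) 1) :
    ∀ t > 0, 1 - Real.exp (-r * t) < Delta n γ r p t := by
  intro t ht
  have hβ := beta_strictMonoOn (by omega : 1 ≤ n) hγ
  have hp (s : ℝ) (hs : 0 ≤ s) : p s ∈ Set.Icc 0 1 := Set.Ioc_subset_Icc_self (hmem s hs)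
  have hβ_nonneg (s : ℝ) (hs : 0 ≤ s) : 0 ≤ beta n γ (p s) := by
    simpa [beta] using hβ.monotoneOn (Set.left_mem_Icc.2 zero_le_one) (hp s hs) (hp s hs).1
  have hw_anti : StrictAntiOn (fun s => beta n γ (p s) ^ (1 / γ)) (Set.Ici 0) :=
    fun a ha b hb hab => rpow_lt_rpow (hβ_nonneg b hb) (hβ (hp b hb) (hp a ha) (hanti ha hb hab))
      (by positivity)
  rw [Delta_eq_div]
  exact one_sub_exp_lt_integral_div_of_strictAntiOn hr ht
    (fun s hs => rpow_nonneg (hβ_nonneg s hs) _) hw_anti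

/-- the flat tontine (payout rate `r`, the `γ → ∞` limit of the optimal
tontine) has strictly smaller cumulative discounted payout at every positive time than
the optimal tontine for any finite risk aversion `γ`:  `1 - e^{-rt} < Δ_{n,γ}(t)`. -/
theorem flat_tontine_depletes_slower
    (n : ℕ) (hn : 2 ≤ n) (γ : ℝ) (hγ : 0 < γ)
    (r : ℝ) (hr : 0 < r)
    (p : ℝ → ℝ) (hcont : Continuous p) (hanti : StrictAntiOn p (Set.Ici 0))
    (hmem : ∀ t, 0 ≤ t → p t ∈ Set.Ioc (0 : ℝ) 1) (hp0 : p 0 = 1)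
    (hlim : Filter.Tendsto p Filter.atTop (nhds 0)) :
    ∀ t > 0, 1 - Real.exp (-r * t) < Delta n γ r p t :=
  flat_tontine_depletes_slower_general n hn γ hγ r hr p hanti hmem
end

section
/- Fix an integer n ≥ 2, γ > 0 with γ ≠ 1, a rate r > 0, and a survival function t ↦ ₜp_x : [0,∞) → (0,1] which is continuous, strictly decreasing, with ₀p_x = 1 and ₜp_x → 0 as t → ∞. Then the utility of the optimal tontine is strictly less than the utility of the actuarially fair life annuity: (1/(1−γ)) · (∫_0^∞ e^{−rt} β_{n,γ}(ₜp_x)^{1/γ} dt)^γ < (1/(1−γ)) · (∫_0^∞ e^{−rt} ₜp_x dt)^γ. -/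
open MeasureTheory Real Finset

/-!
Let `N - 1 ~ Bin(n - 1, q)` and `X = n / N`, so that `θ(q) = E[X ^ (1 - γ)]`. The identity
`n · C(n - 1, k) = (k + 1) · C(n, k + 1)` gives `q · E[X] = 1 - (1 - q) ^ n < 1`. Jensen's inequality
for the concave CRRA utility `u(x) = x ^ (1 - γ) / (1 - γ)` then yields
`θ(q) / (1 - γ) = E[u(X)] ≤ u(E[X]) < u(1 / q)`, i.e. `β(q) / (1 - γ) < q ^ γ / (1 - γ)` for
`0 < q < 1`. Since `x ↦ c · x ^ γ` and `x ↦ c · x` order `[0, ∞)` in the same way for every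
constant `c`, with `c = 1 / (1 - γ)` this reads `c · β(q) ^ (1 / γ) < c · q`; integrating against
`e^{-rt}` and passing back through `x ↦ c · x ^ γ` gives the inequality of utilities, for `γ < 1`
and `γ > 1` alike.
-/

noncomputable def crraUtility (γ x : ℝ) : ℝ := x ^ (1 - γ) / (1 - γ)

lemma hasDerivAt_crraUtility {γ x : ℝ} (hγ : γ ≠ 1) (hx : 0 < x) :
    HasDerivAt (crraUtility γ) (x ^ (-γ)) x := by
  have h := (hasDerivAt_rpow_const (p := 1 - γ) (Or.inl hx.ne')).div_const (1 - γ)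
  refine h.congr_deriv ?_
  rw [mul_div_cancel_left₀ _ (sub_ne_zero.2 hγ.symm)]
  ring_nf

lemma concaveOn_crraUtility {γ : ℝ} (hγ0 : 0 ≤ γ) (hγ1 : γ ≠ 1) :
    ConcaveOn ℝ (Set.Ioi 0) (crraUtility γ) := by
  refine concaveOn_of_hasDerivWithinAt2_nonpos (f' := fun x => x ^ (-γ))
    (f'' := fun x => -γ * x ^ (-γ - 1)) (convex_Ioi 0)
    (fun x hx => (hasDerivAt_crraUtility hγ1 hx).continuousAt.continuousWithinAt) ?_ ?_ ?_ <;>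
    rw [interior_Ioi] <;> intro x hx
  · exact (hasDerivAt_crraUtility hγ1 hx).hasDerivWithinAt
  · exact (hasDerivAt_rpow_const (Or.inl (ne_of_gt hx))).hasDerivWithinAt
  · exact mul_nonpos_of_nonpos_of_nonneg (neg_nonpos.2 hγ0) (rpow_nonneg (le_of_lt hx) _)

lemma strictMonoOn_crraUtility {γ : ℝ} (hγ : γ ≠ 1) :
    StrictMonoOn (crraUtility γ) (Set.Ioi 0) := by
  refine strictMonoOn_of_deriv_pos (convex_Ioi 0)
    (fun x hx => (hasDerivAt_crraUtility hγ hx).continuousAt.continuousWithinAt) fun x hx => ?_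
  rw [interior_Ioi] at hx
  rw [(hasDerivAt_crraUtility hγ hx).deriv]
  exact rpow_pos_of_pos hx _

noncomputable def binomialWeight (m : ℕ) (q : ℝ) (k : ℕ) : ℝ :=
  m.choose k * q ^ k * (1 - q) ^ (m - k)

lemma binomialWeight_nonneg (m : ℕ) {q : ℝ} (hq0 : 0 ≤ q) (hq1 : q ≤ 1) (k : ℕ) :
    0 ≤ binomialWeight m q k := by
  have : 0 ≤ 1 - q := sub_nonneg.2 hq1
  unfold binomialWeight
  positivity

lemma sum_binomialWeight (m : ℕ) (q : ℝ) : ∑ k ∈ range (m + 1), binomialWeight m q k = 1 := by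
  have h := add_pow q (1 - q) m
  rw [add_sub_cancel, one_pow] at h
  exact (sum_congr rfl fun k _ => by rw [binomialWeight]; ring).trans h.symm

lemma mul_sum_binomialWeight_mul_div (m : ℕ) (q : ℝ) :
    q * ∑ k ∈ range (m + 1), binomialWeight m q k * (((m : ℝ) + 1) / ((k : ℝ) + 1)) =
      1 - (1 - q) ^ (m + 1) := by
  have hshift : ∀ k ∈ range (m + 1),
      q * (binomialWeight m q k * (((m : ℝ) + 1) / ((k : ℝ) + 1))) =
        binomialWeight (m + 1) q (k + 1) := by
    intro k _
    have hchoose : ((m : ℝ) + 1) * m.choose k = (m + 1).choose (k + 1) * ((k : ℝ) + 1) := by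
      exact_mod_cast Nat.add_one_mul_choose_eq m k
    unfold binomialWeight
    rw [Nat.add_sub_add_right, pow_succ]
    field_simp
    linear_combination q ^ k * (1 - q) ^ (m - k) * q * hchoose
  rw [mul_sum, sum_congr rfl hshift]
  have h := sum_binomialWeight (m + 1) q
  have h0 : binomialWeight (m + 1) q 0 = (1 - q) ^ (m + 1) := by simp [binomialWeight]
  rw [sum_range_succ', h0] at h
  linarith

lemma theta_succ_div_one_sub (m : ℕ) (γ q : ℝ) :
    theta (m + 1) γ q / (1 - γ) =
      ∑ k ∈ range (m + 1), binomialWeight m q k * crraUtility γ (((m : ℝ) + 1) / ((k : ℝ) + 1)) := by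
  rw [theta, sum_div]
  refine sum_congr rfl fun k _ => ?_
  simp only [binomialWeight, crraUtility, Nat.add_sub_cancel, Nat.cast_add, Nat.cast_one]
  ring

lemma theta_nonneg (n : ℕ) (γ : ℝ) {q : ℝ} (hq0 : 0 ≤ q) (hq1 : q ≤ 1) :
    0 ≤ theta n γ q := by
  refine sum_nonneg fun k _ => ?_
  have : 0 ≤ 1 - q := sub_nonneg.2 hq1
  positivity

lemma beta_nonneg_s14 (n : ℕ) (γ : ℝ) {q : ℝ} (hq0 : 0 ≤ q) (hq1 : q ≤ 1) :
    0 ≤ beta n γ q :=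
  mul_nonneg hq0 (theta_nonneg n γ hq0 hq1)

lemma beta_succ_div_one_sub_lt {m : ℕ} {γ q : ℝ} (hγ0 : 0 ≤ γ) (hγ1 : γ ≠ 1) (hq0 : 0 < q)
    (hq1 : q < 1) : beta (m + 1) γ q / (1 - γ) < q ^ γ / (1 - γ) := by
  set X : ℕ → ℝ := fun k => ((m : ℝ) + 1) / ((k : ℝ) + 1)
  set mean := ∑ k ∈ range (m + 1), binomialWeight m q k * X k
  have hjensen : theta (m + 1) γ q / (1 - γ) ≤ crraUtility γ mean := by
    simpa [theta_succ_div_one_sub] using (concaveOn_crraUtility hγ0 hγ1).le_map_sum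
      (fun k _ => binomialWeight_nonneg m hq0.le hq1.le k) (sum_binomialWeight m q)
      (fun k _ => show 0 < X k by positivity)
  have hmean : q * mean = 1 - (1 - q) ^ (m + 1) := mul_sum_binomialWeight_mul_div m q
  have hpow : 0 < (1 - q) ^ (m + 1) := pow_pos (sub_pos.2 hq1) _
  have hpow' : (1 - q) ^ (m + 1) < 1 := pow_lt_one₀ (by linarith) (by linarith) m.succ_ne_zero
  have hmean_pos : 0 < mean := pos_of_mul_pos_right (by linarith) hq0.le
  have hmean_lt : mean < q⁻¹ := by
    rw [← mul_lt_mul_iff_right₀ hq0, mul_inv_cancel₀ hq0.ne']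
    linarith
  have hutil : crraUtility γ mean < crraUtility γ q⁻¹ :=
    strictMonoOn_crraUtility hγ1 hmean_pos (inv_pos.2 hq0) hmean_lt
  calc beta (m + 1) γ q / (1 - γ) = q * (theta (m + 1) γ q / (1 - γ)) := by
        rw [beta, mul_div_assoc]
    _ < q * crraUtility γ q⁻¹ := mul_lt_mul_of_pos_left (hjensen.trans_lt hutil) hq0
    _ = q ^ γ / (1 - γ) := by
        rw [crraUtility, mul_div_assoc', inv_rpow hq0.le, ← rpow_neg hq0.le]
        nth_rw 1 [← rpow_one q]
        rw [← rpow_add hq0]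
        ring_nf

lemma mul_rpow_lt_mul_rpow_iff {c γ x y : ℝ} (hγ : 0 < γ) (hx : 0 ≤ x) (hy : 0 ≤ y) :
    c * x ^ γ < c * y ^ γ ↔ c * x < c * y := by
  rcases lt_trichotomy c 0 with hc | rfl | hc
  · rw [mul_lt_mul_left_of_neg hc, mul_lt_mul_left_of_neg hc, rpow_lt_rpow_iff hy hx hγ]
  · simp
  · rw [mul_lt_mul_iff_right₀ hc, mul_lt_mul_iff_right₀ hc, rpow_lt_rpow_iff hx hy hγ]

lemma one_div_one_sub_mul_beta_succ_rpow_lt {m : ℕ} {γ q : ℝ} (hγ : 0 < γ) (hγ1 : γ ≠ 1)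
    (hq0 : 0 < q) (hq1 : q < 1) :
    1 / (1 - γ) * beta (m + 1) γ q ^ (1 / γ) < 1 / (1 - γ) * q := by
  have hβ := beta_nonneg_s14 (m + 1) γ hq0.le hq1.le
  rw [← mul_rpow_lt_mul_rpow_iff hγ (rpow_nonneg hβ _) hq0.le, one_div γ,
    rpow_inv_rpow hβ hγ.ne', one_div_mul_eq_div, one_div_mul_eq_div]
  exact beta_succ_div_one_sub_lt hγ.le hγ1 hq0 hq1

lemma integrableOn_exp_mul_comp {r : ℝ} (hr : 0 < r) {φ p : ℝ → ℝ} (hφ : Continuous φ)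
    (hp : Continuous p) (hp_mem : Set.MapsTo p (Set.Ioi 0) (Set.Icc 0 1)) :
    IntegrableOn (fun t => exp (-r * t) * φ (p t)) (Set.Ioi 0) := by
  obtain ⟨C, hC⟩ := isCompact_Icc.exists_bound_of_continuousOn hφ.continuousOn
  refine (exp_neg_integrableOn_Ioi 0 hr).mul_bdd (hφ.comp hp).aestronglyMeasurable (c := C) ?_
  filter_upwards [ae_restrict_mem measurableSet_Ioi] with t ht using hC _ (hp_mem ht)

lemma setIntegral_lt_setIntegral_of_forall_lt {α : Type*} [MeasurableSpace α] {μ : Measure α}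
    {s : Set α} {f g : α → ℝ} (hs : MeasurableSet s) (hμs : μ s ≠ 0) (hf : IntegrableOn f s μ)
    (hg : IntegrableOn g s μ) (hlt : ∀ x ∈ s, f x < g x) :
    ∫ x in s, f x ∂μ < ∫ x in s, g x ∂μ := by
  rw [← sub_pos, ← integral_sub hg hf]
  change 0 < ∫ x in s, (g - f) x ∂μ
  rw [setIntegral_pos_iff_support_of_nonneg_ae _ (hg.sub hf)]
  · have hsupp : s ⊆ Function.support (g - f) := fun x hx => (sub_pos.2 (hlt x hx)).ne'
    rwa [Set.inter_eq_right.2 hsupp, pos_iff_ne_zero]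
  · filter_upwards [ae_restrict_mem hs] with x hx using sub_nonneg.2 (hlt x hx).le

theorem tontine_utility_lt_annuity_utility_general
    (n : ℕ) (hn : 2 ≤ n) (γ : ℝ) (hγ : 0 < γ) (hγ1 : γ ≠ 1)
    (r : ℝ) (hr : 0 < r)
    (p : ℝ → ℝ) (hcont : Continuous p) (hanti : StrictAntiOn p (Set.Ici 0))
    (hmem : ∀ t, 0 ≤ t → p t ∈ Set.Ioc (0 : ℝ) 1) (hp0 : p 0 = 1) :
    (1 / (1 - γ)) *
        (∫ t in Set.Ioi (0 : ℝ), Real.exp (-r * t) * beta n γ (p t) ^ (1 / γ)) ^ γ <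
      (1 / (1 - γ)) * (∫ t in Set.Ioi (0 : ℝ), Real.exp (-r * t) * p t) ^ γ := by
  obtain ⟨m, rfl⟩ : ∃ m, n = m + 1 := ⟨n - 1, by omega⟩
  have hp_mem : ∀ t ∈ Set.Ioi (0 : ℝ), p t ∈ Set.Ioo 0 1 := fun t ht =>
    ⟨(hmem t (le_of_lt ht)).1, hp0 ▸ hanti Set.self_mem_Ici (Set.mem_Ici.2 (le_of_lt ht)) ht⟩
  have hp_Icc : Set.MapsTo p (Set.Ioi 0) (Set.Icc 0 1) := fun t ht =>
    Set.Ioo_subset_Icc_self (hp_mem t ht)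
  have hβ_cont : Continuous fun q => beta (m + 1) γ q ^ (1 / γ) :=
    (continuous_beta _ γ).rpow_const fun _ => Or.inr (by positivity)
  have htontine := integrableOn_exp_mul_comp hr hβ_cont hcont hp_Icc
  have hannuity := integrableOn_exp_mul_comp hr continuous_id hcont hp_Icc
  rw [mul_rpow_lt_mul_rpow_iff hγ, ← integral_const_mul, ← integral_const_mul]
  · refine setIntegral_lt_setIntegral_of_forall_lt measurableSet_Ioi (by simp)
      (htontine.const_mul _) (hannuity.const_mul _) fun t ht => ?_
    have h := one_div_one_sub_mul_beta_succ_rpow_lt (m := m) hγ hγ1 (hp_mem t ht).1 (hp_mem t ht).2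
    rw [mul_left_comm, mul_left_comm _ (exp _)]
    exact mul_lt_mul_of_pos_left h (exp_pos _)
  · exact setIntegral_nonneg measurableSet_Ioi fun t ht =>
      mul_nonneg (exp_pos _).le (rpow_nonneg (beta_nonneg_s14 _ γ (hp_Icc ht).1 (hp_Icc ht).2) _)
  · exact setIntegral_nonneg measurableSet_Ioi fun t ht => mul_nonneg (exp_pos _).le (hp_Icc ht).1

/-- for `γ ≠ 1`, the utility of the optimal tontine is strictly less than
the utility of the actuarially fair life annuity. -/
theorem tontine_utility_lt_annuity_utility
    (n : ℕ) (hn : 2 ≤ n) (γ : ℝ) (hγ : 0 < γ) (hγ1 : γ ≠ 1)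
    (r : ℝ) (hr : 0 < r)
    (p : ℝ → ℝ) (hcont : Continuous p) (hanti : StrictAntiOn p (Set.Ici 0))
    (hmem : ∀ t, 0 ≤ t → p t ∈ Set.Ioc (0 : ℝ) 1) (hp0 : p 0 = 1)
    (hlim : Filter.Tendsto p Filter.atTop (nhds 0)) :
    (1 / (1 - γ)) *
        (∫ t in Set.Ioi (0 : ℝ), Real.exp (-r * t) * beta n γ (p t) ^ (1 / γ)) ^ γ <
      (1 / (1 - γ)) * (∫ t in Set.Ioi (0 : ℝ), Real.exp (-r * t) * p t) ^ γ :=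
  tontine_utility_lt_annuity_utility_general n hn γ hγ hγ1 r hr p hcont hanti hmem hp0
end

section
/- Fix an integer n ≥ 2, a rate r > 0, and a survival function t ↦ ₜp_x : [0,∞) → (0,1] which is continuous, strictly decreasing, with ₀p_x = 1 and ₜp_x → 0 as t → ∞; set c₀ = (∫_0^∞ e^{−rt} ₜp_x dt)^{−1}. Then for logarithmic utility (γ = 1) the utility of the optimal (natural) tontine is strictly less than that of the actuarially fair annuity: ∫_0^∞ e^{−rt} ₜp_x · E[log(n c₀ ₜp_x / N(ₜp_x))] dt < ∫_0^∞ e^{−rt} ₜp_x · log(c₀) dt, where E[log(n c₀ p / N(p))] = Σ_{k=0}^{n−1} C(n−1,k) p^k (1−p)^{n−1−k} log(n c₀ p/(k+1)). -/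
/-!
For `γ = 1` each survivor of the natural tontine receives `n c₀ p / N(p)` at time `t`, where
`p = ₜp_x`. Since `log x ≤ x - 1`,
`E[log (n c₀ p / N(p))] ≤ log c₀ + E[n p / N(p)] - 1`, and the binomial identity
`E[n p / N(p)] = 1 - (1 - p)^n` turns this into `log c₀ - (1 - p)^n`, strictly below the annuity's
`log c₀` as soon as `p < 1`, i.e. for every `t > 0`. Both integrands are `e^{-rt}` times a bounded
continuous function of `p`, hence integrable, and the strict pointwise inequality integrates.
-/

open MeasureTheory Real Finset

theorem sum_choose_mul_pow_mul_one_sub_pow {R : Type*} [CommRing R] (m : ℕ) (q : R) :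
    ∑ k ∈ range (m + 1), (m.choose k : R) * q ^ k * (1 - q) ^ (m - k) = 1 := by
  have h := (add_pow q (1 - q) m).symm
  rw [add_sub_cancel, one_pow] at h
  exact (sum_congr rfl fun k _ => by ring).trans h

theorem sum_choose_mul_pow_mul_one_sub_pow_mul_div_succ {R : Type*} [Field R] [CharZero R]
    (m : ℕ) (q : R) :
    ∑ k ∈ range (m + 1), (m.choose k : R) * q ^ k * (1 - q) ^ (m - k) *
      (((m : R) + 1) * q / ((k : R) + 1)) = 1 - (1 - q) ^ (m + 1) := by
  have h := add_pow q (1 - q) (m + 1)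
  rw [add_sub_cancel, one_pow, sum_range_succ'] at h
  simp only [pow_zero, Nat.sub_zero, Nat.choose_zero_right, Nat.cast_one, one_mul, mul_one] at h
  rw [eq_sub_iff_add_eq]
  refine Eq.trans ?_ h.symm
  congr 1
  refine sum_congr rfl fun k _ => ?_
  have hchoose : ((m : R) + 1) * m.choose k = (m + 1).choose (k + 1) * ((k : R) + 1) := by
    exact_mod_cast Nat.add_one_mul_choose_eq m k
  have hk : (k : R) + 1 ≠ 0 := by exact_mod_cast k.succ_ne_zero
  rw [Nat.add_sub_add_right]
  field_simp
  linear_combination q ^ (k + 1) * (1 - q) ^ (m - k) * hchoose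

/-- `E[log (n c q / N(q))]`, the expected log-payout of a survivor of the natural tontine when
the survival probability is `q`. -/
noncomputable def expectedLogPayout (n : ℕ) (c q : ℝ) : ℝ :=
  ∑ k ∈ range n, ((n - 1).choose k : ℝ) * q ^ k * (1 - q) ^ (n - 1 - k) *
    log ((n : ℝ) * c * q / ((k : ℝ) + 1))

theorem expectedLogPayout_le {n : ℕ} {c q : ℝ} (hn : 1 ≤ n) (hc : c ≠ 0) (hq : 0 < q)
    (hq₁ : q ≤ 1) : expectedLogPayout n c q ≤ log c - (1 - q) ^ n := by
  obtain ⟨m, rfl⟩ : ∃ m, n = m + 1 := ⟨n - 1, by omega⟩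
  have hweight : ∀ k, 0 ≤ (m.choose k : ℝ) * q ^ k * (1 - q) ^ (m - k) := fun k =>
    mul_nonneg (by positivity) (pow_nonneg (sub_nonneg.2 hq₁) _)
  have hlog : ∀ k : ℕ, log (((m : ℝ) + 1) * c * q / ((k : ℝ) + 1)) ≤
      log c + (((m : ℝ) + 1) * q / ((k : ℝ) + 1) - 1) := fun k => by
    have hx : 0 < ((m : ℝ) + 1) * q / ((k : ℝ) + 1) := by positivity
    rw [show ((m : ℝ) + 1) * c * q / ((k : ℝ) + 1) = c * (((m : ℝ) + 1) * q / ((k : ℝ) + 1)) by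
      ring, log_mul hc hx.ne']
    linarith [log_le_sub_one_of_pos hx]
  simp only [expectedLogPayout, add_tsub_cancel_right, Nat.cast_add, Nat.cast_one]
  calc _ ≤ ∑ k ∈ range (m + 1), (m.choose k : ℝ) * q ^ k * (1 - q) ^ (m - k) *
          (log c + (((m : ℝ) + 1) * q / ((k : ℝ) + 1) - 1)) :=
        sum_le_sum fun k _ => mul_le_mul_of_nonneg_left (hlog k) (hweight k)
    _ = (log c - 1) * ∑ k ∈ range (m + 1), (m.choose k : ℝ) * q ^ k * (1 - q) ^ (m - k) +
          ∑ k ∈ range (m + 1), (m.choose k : ℝ) * q ^ k * (1 - q) ^ (m - k) *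
            (((m : ℝ) + 1) * q / ((k : ℝ) + 1)) := by
        rw [mul_sum, ← sum_add_distrib]
        exact sum_congr rfl fun k _ => by ring
    _ = log c - (1 - q) ^ (m + 1) := by
        rw [sum_choose_mul_pow_mul_one_sub_pow, sum_choose_mul_pow_mul_one_sub_pow_mul_div_succ]
        ring

/-- Multiplying by `q` removes the singularity of `log q` at `0`. -/
theorem mul_expectedLogPayout_eq {n : ℕ} {c : ℝ} (hc : c ≠ 0) (q : ℝ) :
    q * expectedLogPayout n c q = ∑ k ∈ range n, ((n - 1).choose k : ℝ) * q ^ k *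
      (1 - q) ^ (n - 1 - k) * (q * log ((n : ℝ) * c / ((k : ℝ) + 1)) + q * log q) := by
  rw [expectedLogPayout, mul_sum]
  refine sum_congr rfl fun k hk => ?_
  rcases eq_or_ne q 0 with rfl | hq
  · simp
  have hn : (n : ℝ) ≠ 0 := by
    exact_mod_cast (Nat.zero_lt_of_lt (mem_range.1 hk)).ne'
  rw [mul_right_comm, mul_div_right_comm, log_mul (by positivity) hq]
  ring

theorem continuous_mul_expectedLogPayout {n : ℕ} {c : ℝ} (hc : c ≠ 0) :
    Continuous fun q => q * expectedLogPayout n c q := by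
  simp_rw [mul_expectedLogPayout_eq hc]
  fun_prop

theorem integrableOn_exp_neg_mul_comp {r : ℝ} {g p : ℝ → ℝ} (hr : 0 < r)
    (hg : ContinuousOn g (Set.Icc 0 1)) (hp : ContinuousOn p (Set.Ioi 0))
    (hp_mem : ∀ t ∈ Set.Ioi (0 : ℝ), p t ∈ Set.Icc 0 1) :
    IntegrableOn (fun t => exp (-r * t) * g (p t)) (Set.Ioi 0) := by
  obtain ⟨C, hC⟩ := isCompact_Icc.exists_bound_of_continuousOn hg
  refine (exp_neg_integrableOn_Ioi 0 hr).mul_bdd (c := C)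
    ((hg.comp hp hp_mem).aestronglyMeasurable measurableSet_Ioi) ?_
  filter_upwards [ae_restrict_mem measurableSet_Ioi] with t ht
  exact hC _ (hp_mem t ht)

theorem setIntegral_pos_of_pos {X : Type*} [MeasurableSpace X] {μ : Measure X} {s : Set X}
    {f : X → ℝ} (hs : MeasurableSet s) (hμs : μ s ≠ 0) (hf : IntegrableOn f s μ)
    (hpos : ∀ x ∈ s, 0 < f x) : 0 < ∫ x in s, f x ∂μ := by
  rw [setIntegral_pos_iff_support_of_nonneg_ae _ hf]
  · rwa [Set.inter_eq_right.2 fun x hx => Function.mem_support.2 (hpos x hx).ne',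
      pos_iff_ne_zero]
  · filter_upwards [ae_restrict_mem hs] with x hx
    exact (hpos x hx).le

theorem setIntegral_lt_setIntegral_of_lt {X : Type*} [MeasurableSpace X] {μ : Measure X}
    {s : Set X} {f g : X → ℝ} (hs : MeasurableSet s) (hμs : μ s ≠ 0) (hf : IntegrableOn f s μ)
    (hg : IntegrableOn g s μ) (hlt : ∀ x ∈ s, f x < g x) :
    ∫ x in s, f x ∂μ < ∫ x in s, g x ∂μ := by
  have h : 0 < ∫ x in s, (g x - f x) ∂μ :=
    setIntegral_pos_of_pos hs hμs (hg.sub hf) fun x hx => sub_pos.2 (hlt x hx)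
  rw [integral_sub hg hf] at h
  linarith

theorem log_tontine_utility_lt_annuity_general
    (n : ℕ) (hn : 2 ≤ n)
    (r : ℝ) (hr : 0 < r)
    (p : ℝ → ℝ) (hcont : Continuous p) (hanti : StrictAntiOn p (Set.Ici 0))
    (hmem : ∀ t, 0 ≤ t → p t ∈ Set.Ioc (0 : ℝ) 1) (hp0 : p 0 = 1)
    (c₀ : ℝ) (hc₀ : c₀ = (∫ t in Set.Ioi (0 : ℝ), Real.exp (-r * t) * p t)⁻¹) :
    ∫ t in Set.Ioi (0 : ℝ), Real.exp (-r * t) * p t *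
        (∑ k ∈ Finset.range n,
          ((n - 1).choose k : ℝ) * p t ^ k * (1 - p t) ^ (n - 1 - k) *
            Real.log ((n : ℝ) * c₀ * p t / ((k : ℝ) + 1))) <
      ∫ t in Set.Ioi (0 : ℝ), Real.exp (-r * t) * p t * Real.log c₀ := by
  have hp_pos : ∀ t ∈ Set.Ioi (0 : ℝ), 0 < p t := fun t ht => (hmem t (le_of_lt ht)).1
  have hp_mem : ∀ t ∈ Set.Ioi (0 : ℝ), p t ∈ Set.Icc 0 1 := fun t ht =>
    Set.Ioc_subset_Icc_self (hmem t (le_of_lt ht))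
  have hp_lt_one : ∀ t ∈ Set.Ioi (0 : ℝ), p t < 1 := fun t ht =>
    hp0 ▸ hanti Set.self_mem_Ici (Set.mem_Ici.2 (le_of_lt ht)) ht
  have hvolume : volume (Set.Ioi (0 : ℝ)) ≠ 0 := by simp
  have hannuity : IntegrableOn (fun t => exp (-r * t) * p t) (Set.Ioi 0) :=
    integrableOn_exp_neg_mul_comp (g := fun q => q) hr continuousOn_id hcont.continuousOn hp_mem
  have hc₀_pos : 0 < c₀ := hc₀ ▸ inv_pos.2 (setIntegral_pos_of_pos measurableSet_Ioi hvolume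
    hannuity fun t ht => mul_pos (exp_pos _) (hp_pos t ht))
  have htontine : IntegrableOn (fun t => exp (-r * t) * p t * expectedLogPayout n c₀ (p t))
      (Set.Ioi 0) := by
    simpa only [mul_assoc] using integrableOn_exp_neg_mul_comp hr
      (continuous_mul_expectedLogPayout hc₀_pos.ne').continuousOn hcont.continuousOn hp_mem
  refine setIntegral_lt_setIntegral_of_lt measurableSet_Ioi hvolume htontine
    (hannuity.mul_const _) fun t ht =>
      mul_lt_mul_of_pos_left ?_ (mul_pos (exp_pos _) (hp_pos t ht))
  refine (expectedLogPayout_le (n := n) (by omega) hc₀_pos.ne' (hp_pos t ht)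
    (hp_lt_one t ht).le).trans_lt ?_
  linarith [pow_pos (sub_pos.2 (hp_lt_one t ht)) n]

/-- for logarithmic utility (`γ = 1`), the utility of the natural (optimal)
tontine is strictly less than that of the actuarially fair annuity. -/
theorem log_tontine_utility_lt_annuity
    (n : ℕ) (hn : 2 ≤ n)
    (r : ℝ) (hr : 0 < r)
    (p : ℝ → ℝ) (hcont : Continuous p) (hanti : StrictAntiOn p (Set.Ici 0))
    (hmem : ∀ t, 0 ≤ t → p t ∈ Set.Ioc (0 : ℝ) 1) (hp0 : p 0 = 1)
    (hlim : Filter.Tendsto p Filter.atTop (nhds 0))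
    (c₀ : ℝ) (hc₀ : c₀ = (∫ t in Set.Ioi (0 : ℝ), Real.exp (-r * t) * p t)⁻¹) :
    ∫ t in Set.Ioi (0 : ℝ), Real.exp (-r * t) * p t *
        (∑ k ∈ Finset.range n,
          ((n - 1).choose k : ℝ) * p t ^ k * (1 - p t) ^ (n - 1 - k) *
            Real.log ((n : ℝ) * c₀ * p t / ((k : ℝ) + 1))) <
      ∫ t in Set.Ioi (0 : ℝ), Real.exp (-r * t) * p t * Real.log c₀ :=
  log_tontine_utility_lt_annuity_general n hn r hr p hcont hanti hmem hp0 c₀ hc₀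
end

section
/- For every integer n ≥ 2 and every p ∈ (0,1): E[log N(p)] > log(np), i.e. Σ_{k=0}^{n−1} C(n−1,k) p^k (1−p)^{n−1−k} log(k+1) > log(np). -/
open MeasureTheory Real Finset

/-! Since `log x ≥ 1 - 1/x`, for `N > 0` and `c > 0` we have `log N ≥ log c + 1 - c / N`; taking
expectations, `E[log N] ≥ log c + 1 - c E[1/N]`. For `N - 1 ~ Bin(n-1, p)` the absorption identity
`n C(n-1,k) = (k+1) C(n,k+1)` gives `n p E[1/N] = 1 - (1-p)^n`, so with `c = n p` we get
`E[log N(p)] ≥ log(n p) + (1-p)^n > log(n p)`. -/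

theorem log_add_one_sub_mul_sum_div_le_sum_mul_log {ι : Type*} (s : Finset ι) (w x : ι → ℝ)
    (hw : ∀ i ∈ s, 0 ≤ w i) (hw1 : ∑ i ∈ s, w i = 1) (hx : ∀ i ∈ s, 0 < x i) {c : ℝ}
    (hc : 0 < c) :
    log c + 1 - c * ∑ i ∈ s, w i / x i ≤ ∑ i ∈ s, w i * log (x i) := by
  have hterm : ∀ i ∈ s, w i * (log c + 1 - c / x i) ≤ w i * log (x i) := by
    intro i hi
    refine mul_le_mul_of_nonneg_left ?_ (hw i hi)
    have h := one_sub_inv_le_log_of_pos (div_pos (hx i hi) hc)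
    rw [inv_div, log_div (hx i hi).ne' hc.ne'] at h
    linarith
  calc log c + 1 - c * ∑ i ∈ s, w i / x i
      = ∑ i ∈ s, w i * (log c + 1 - c / x i) := by
        have : log c + 1 = ∑ i ∈ s, w i * (log c + 1) := by rw [← sum_mul, hw1, one_mul]
        conv_lhs => rw [this, mul_sum, ← sum_sub_distrib]
        exact sum_congr rfl fun i _ => by ring
    _ ≤ ∑ i ∈ s, w i * log (x i) := sum_le_sum hterm

theorem sum_choose_mul_pow_mul_pow {R : Type*} [CommSemiring R] (m : ℕ) (p q : R) :
    ∑ k ∈ range (m + 1), (m.choose k : R) * p ^ k * q ^ (m - k) = (p + q) ^ m := by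
  rw [add_pow]
  exact sum_congr rfl fun k _ => by ring

theorem mul_sum_choose_mul_pow_mul_pow_div_succ {K : Type*} [Field K] [CharZero K] (m : ℕ)
    (p q : K) :
    ((m + 1) * p) * ∑ k ∈ range (m + 1), (m.choose k : K) * p ^ k * q ^ (m - k) / (k + 1) =
      (p + q) ^ (m + 1) - q ^ (m + 1) := by
  have habsorb : ∀ k ∈ range (m + 1),
      (m + 1) * p * ((m.choose k : K) * p ^ k * q ^ (m - k) / (k + 1)) =
        p ^ (k + 1) * q ^ (m + 1 - (k + 1)) * ((m + 1).choose (k + 1) : K) := by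
    intro k _
    have h : ((m + 1 : ℕ) : K) * m.choose k = (m + 1).choose (k + 1) * ((k : K) + 1) := by
      exact_mod_cast Nat.add_one_mul_choose_eq m k
    push_cast at h
    rw [Nat.add_sub_add_right]
    field_simp
    linear_combination p ^ (k + 1) * q ^ (m - k) * h
  rw [mul_sum, sum_congr rfl habsorb, add_pow, sum_range_succ' _ (m + 1)]
  simp

/-- `E[log N(p)] > log (n p)` for `0 < p < 1`. -/
theorem log_expectation_gt
    (n : ℕ) (hn : 2 ≤ n) (p : ℝ) (hp : p ∈ Set.Ioo (0 : ℝ) 1) :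
    Real.log ((n : ℝ) * p) <
      ∑ k ∈ Finset.range n,
        ((n - 1).choose k : ℝ) * p ^ k * (1 - p) ^ (n - 1 - k) * Real.log ((k : ℝ) + 1) := by
  obtain ⟨hp0, hp1⟩ := hp
  have hq0 : 0 < 1 - p := by linarith
  obtain ⟨m, rfl⟩ : ∃ m, n = m + 1 := ⟨n - 1, by omega⟩
  simp only [Nat.add_sub_cancel, Nat.cast_add_one]
  have hweights : ∑ k ∈ range (m + 1), (m.choose k : ℝ) * p ^ k * (1 - p) ^ (m - k) = 1 := by
    rw [sum_choose_mul_pow_mul_pow, add_sub_cancel, one_pow]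
  have hinv := mul_sum_choose_mul_pow_mul_pow_div_succ m p (1 - p)
  rw [add_sub_cancel, one_pow] at hinv
  have hgibbs := log_add_one_sub_mul_sum_div_le_sum_mul_log (range (m + 1))
    (fun k => (m.choose k : ℝ) * p ^ k * (1 - p) ^ (m - k)) (fun k => (k : ℝ) + 1)
    (fun k _ => by positivity) hweights
    (fun k _ => by positivity) (c := (m + 1) * p) (by positivity)
  have hq : 0 < (1 - p) ^ (m + 1) := pow_pos hq0 _
  rw [hinv] at hgibbs
  linarith
end
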